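/- arXiv:2601.10821 — 12 statements merged into one kernel-verified Lean document; each statement's English description precedes it below -/
import Mathlib

section
/- Let G be a finite abelian group, π a subgroup of G, and ε > 0. Suppose ζ₁ and ζ₂ are independent G-valued random variables and ζ₂ is supported on π and ε-equidistributed on π. Then for every g ∈ G, P(ζ₁ + ζ₂ = g) ≤ (1+ε) · P(ζ₁ ∈ g + π) / |π|. -/
/-!
Fourier inversion on `π` writes `|π| · f₂ y` as `∑ χ, χ (-y) · f̂₂ χ`. The trivial character
contributes `1` and each of the other `|π| - 1` characters at most `ε / |π|`, so
`f₂ ≤ (1 + ε) / |π|` on `π`. As `f₂` vanishes off `π`, only the `a ∈ g + π` contribute to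
`∑ a, f₁ a · f₂ (g - a)`.
-/

noncomputable section

-- The Fourier coefficient, at a character `χ` of the subgroup `π`, of a
-- distribution `f` on `G` supported on `π` (viewed as a distribution on `π`).
open Classical in
noncomputable def subgroupFourierCoeff {G : Type} [AddCommGroup G] [Fintype G]
    (π : AddSubgroup G) (f : G → ℝ) (χ : AddChar π ℂ) : ℂ :=
  letI : Fintype π := Fintype.ofFinite _
  ∑ a : π, (f (a : G) : ℂ) * χ a

/-- `f` is `ε`-equidistributed on the subgroup `π`. -/
def EquidistOn {G : Type} [AddCommGroup G] [Fintype G]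
    (π : AddSubgroup G) (f : G → ℝ) (ε : ℝ) : Prop :=
  ∀ χ : AddChar π ℂ, χ ≠ 1 →
    ‖subgroupFourierCoeff π f χ‖ ≤ ε / (Nat.card π : ℝ)

/-- The law of the sum of two independent random variables with laws `f`, `g`. -/
noncomputable def convLaw {G : Type} [AddCommGroup G] [Fintype G]
    (f g : G → ℝ) : G → ℝ :=
  fun x => ∑ a : G, f a * g (x - a)

-- `P(ζ₁ ∈ g + π)`: the mass the law `f` gives to the coset `g + π`.
open Classical in
noncomputable def cosetMass {G : Type} [AddCommGroup G] [Fintype G]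
    (f : G → ℝ) (g : G) (π : AddSubgroup G) : ℝ :=
  ∑ x ∈ Finset.univ.filter (fun x => -g + x ∈ π), f x

theorem Fintype.sum_subtype_eq_sum_of_eq_zero {ι M : Type*} [Fintype ι] [AddCommMonoid M]
    {s : Set ι} [Fintype s] {f : ι → M} (hf : ∀ x ∉ s, f x = 0) :
    ∑ a : s, f a = ∑ x, f x := by
  classical
  rw [Finset.sum_congr_set s f (fun a => f a) (fun _ _ => rfl) hf]
  -- the two sides use different `Fintype s` instances
  congr!

namespace AddChar

variable {A : Type} [AddCommGroup A] [Fintype A]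

theorem card_mul_eq_sum_apply_neg_mul_fourier (f : A → ℂ) (y : A) :
    (Fintype.card A : ℂ) * f y = ∑ ψ : AddChar A ℂ, ψ (-y) * ∑ a, f a * ψ a := by
  classical
  calc (Fintype.card A : ℂ) * f y
      = ∑ a, f a * if a - y = 0 then (Fintype.card A : ℂ) else 0 := by
        simp [sub_eq_zero, mul_comm]
    _ = ∑ ψ : AddChar A ℂ, ψ (-y) * ∑ a, f a * ψ a := by
        simp only [← sum_apply_eq_ite, Finset.mul_sum]
        rw [Finset.sum_comm]
        refine Finset.sum_congr rfl fun a _ => Finset.sum_congr rfl fun ψ _ => ?_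
        rw [sub_eq_add_neg, map_add_eq_mul]
        ring

theorem card_mul_le_of_norm_fourier_le {f : A → ℝ} {δ : ℝ} (hδ : 0 ≤ δ) (hf : ∑ a, f a = 1)
    (hfourier : ∀ ψ : AddChar A ℂ, ψ ≠ 1 → ‖∑ a, (f a : ℂ) * ψ a‖ ≤ δ) (y : A) :
    Fintype.card A * f y ≤ 1 + Fintype.card A * δ := by
  classical
  have hψ : ∀ ψ : AddChar A ℂ, ‖∑ a, (f a : ℂ) * ψ a‖ ≤ (if ψ = 1 then 1 else 0) + δ := by
    intro ψ
    split_ifs with h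
    · subst h
      simp [← Complex.ofReal_sum, hf, hδ]
    · simpa using hfourier ψ h
  calc Fintype.card A * f y ≤ ‖(Fintype.card A : ℂ) * (f y : ℂ)‖ := by
        rw [← Complex.ofReal_natCast, ← Complex.ofReal_mul, Complex.norm_real]
        exact Real.le_norm_self _
    _ = ‖∑ ψ : AddChar A ℂ, ψ (-y) * ∑ a, (f a : ℂ) * ψ a‖ := by
        rw [card_mul_eq_sum_apply_neg_mul_fourier (fun a => (f a : ℂ))]
    _ ≤ ∑ ψ : AddChar A ℂ, ‖∑ a, (f a : ℂ) * ψ a‖ := by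
        refine (norm_sum_le _ _).trans_eq (Finset.sum_congr rfl fun ψ _ => ?_)
        rw [norm_mul, norm_apply, one_mul]
    _ ≤ ∑ ψ : AddChar A ℂ, ((if ψ = 1 then 1 else 0) + δ) := Finset.sum_le_sum fun ψ _ => hψ ψ
    _ = 1 + Fintype.card A * δ := by
        rw [Finset.sum_add_distrib, Finset.sum_ite_eq', Finset.sum_const, Finset.card_univ, card_eq]
        simp

end AddChar

theorem EquidistOn.le_div_card {G : Type} [AddCommGroup G] [Fintype G] {π : AddSubgroup G}
    {f : G → ℝ} {ε : ℝ} (hf : EquidistOn π f ε) (hε : 0 ≤ ε) (hf1 : ∑ x, f x = 1)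
    (hfπ : ∀ x, x ∉ π → f x = 0) : ∀ x ∈ π, f x ≤ (1 + ε) / Nat.card π := by
  -- the instance `subgroupFourierCoeff` sums with
  let _ : Fintype π := Fintype.ofFinite _
  intro x hx
  have hn : (0 : ℝ) < Nat.card π := by exact_mod_cast Nat.card_pos
  have hmass : ∑ a : π, f a = 1 := (Fintype.sum_subtype_eq_sum_of_eq_zero (s := π) hfπ).trans hf1
  have key := AddChar.card_mul_le_of_norm_fourier_le (div_nonneg hε hn.le) hmass hf ⟨x, hx⟩
  rw [← Nat.card_eq_fintype_card, mul_div_cancel₀ _ hn.ne'] at key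
  rw [le_div_iff₀ hn]
  linarith

theorem convLaw_le_mul_cosetMass {G : Type} [AddCommGroup G] [Fintype G] {π : AddSubgroup G}
    {f₁ f₂ : G → ℝ} {M : ℝ} (hf₁ : ∀ x, 0 ≤ f₁ x) (hf₂π : ∀ x, x ∉ π → f₂ x = 0)
    (hf₂M : ∀ x ∈ π, f₂ x ≤ M) (g : G) :
    convLaw f₁ f₂ g ≤ M * cosetMass f₁ g π := by
  classical
  have hmem (a : G) : g - a ∈ π ↔ -g + a ∈ π := by
    rw [← π.neg_mem_iff, neg_sub, sub_eq_neg_add]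
  calc convLaw f₁ f₂ g ≤ ∑ a, f₁ a * if -g + a ∈ π then M else 0 := by
        refine Finset.sum_le_sum fun a _ => mul_le_mul_of_nonneg_left ?_ (hf₁ a)
        split_ifs with h
        · exact hf₂M _ ((hmem a).2 h)
        · exact (hf₂π _ (mt (hmem a).1 h)).le
    _ = M * cosetMass f₁ g π := by
        simp only [mul_ite, mul_zero, ← Finset.sum_filter, cosetMass, Finset.mul_sum, mul_comm]

theorem conv_pointwise_bound_general
    {G : Type} [AddCommGroup G] [Fintype G] (π : AddSubgroup G)
    (ε : ℝ) (hε : 0 < ε)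
    (f₁ : G → ℝ) (hf₁0 : ∀ x, 0 ≤ f₁ x)
    (f₂ : G → ℝ) (hf₂1 : ∑ x, f₂ x = 1)
    (hf₂π : ∀ x : G, x ∉ π → f₂ x = 0)
    (hf₂ : EquidistOn π f₂ ε) :
    ∀ g : G, convLaw f₁ f₂ g ≤ (1 + ε) * cosetMass f₁ g π / (Nat.card π : ℝ) := by
  intro g
  rw [mul_div_right_comm]
  exact convLaw_le_mul_cosetMass hf₁0 hf₂π (hf₂.le_div_card hε.le hf₂1 hf₂π) g

/-- **Pointwise bound for a sum with an ε-equidistributed summand.** -/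
theorem conv_pointwise_bound
    {G : Type} [AddCommGroup G] [Fintype G] (π : AddSubgroup G)
    (ε : ℝ) (hε : 0 < ε)
    (f₁ : G → ℝ) (hf₁0 : ∀ x, 0 ≤ f₁ x) (hf₁1 : ∑ x, f₁ x = 1)
    (f₂ : G → ℝ) (hf₂0 : ∀ x, 0 ≤ f₂ x) (hf₂1 : ∑ x, f₂ x = 1)
    (hf₂π : ∀ x : G, x ∉ π → f₂ x = 0)
    (hf₂ : EquidistOn π f₂ ε) :
    ∀ g : G, convLaw f₁ f₂ g ≤ (1 + ε) * cosetMass f₁ g π / (Nat.card π : ℝ) :=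
  conv_pointwise_bound_general π ε hε f₁ hf₁0 f₂ hf₂1 hf₂π hf₂

end
end

section
/- Let R be a finite commutative local ring with maximal ideal 𝔪 and residue field of characteristic p, let M be a finite R-module, and let u be a fixed integer. Let ξ₁, …, ξ_l be i.i.d. R-valued random variables of law μ, whose support contains 0 and 1 and is not contained in any proper subring of R. Fix ε > 0 and set k' = l + u (assume k' ≥ 1). Let C₂ be the set of l-tuples (m₁, …, m_l) ∈ M^l that span M as an R-module, such that every Fourier coefficient of the M-valued random variable Σ_i m_i ξ_i is either equal to 1 or has absolute value at most ε/|M|, and such that at least one nontrivial Fourier coefficient equals 1. Then there is a constant C depending only on M and u such that Σ_{(m_i) ∈ C₂} ‖Σ_i m_i ξ_i‖_∞^{k'} ≤ C · ((1+ε)/p)^l. -/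
/-!
Let `f` be the law of `Σ mᵢ ξᵢ` and `H` the common kernel of the characters `χ` with
`f̂(χ) = 1`. These characters are exactly the ones trivial on the support of `f`; they form a
group `Γ`, and orthogonality over `Γ` gives `|Γ| · |H| = |M|`. Fourier inversion together with
the dichotomy on the coefficients gives `‖f‖_∞ ≤ (|Γ| + ε) / |M| ≤ (1 + ε) / |H|`.

Since `0` and every `r ∈ supp μ` are values of the `ξᵢ`, each `r • mᵢ` lies in the support of `f`,
so every `mᵢ` lies in `A = {a | r • a ∈ H for all r ∈ supp μ}`. As `1 ∈ supp μ`, `A ≤ H`; and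
`A ≠ H`, for otherwise `H` is stable under the subring generated by `supp μ`, which is `R`, so `H`
is a submodule containing the spanning `mᵢ`, while some nontrivial character is trivial on `H`.
Because `p` is nilpotent in `R`, `M` is a `p`-group, hence `p · |A| ≤ |H|`. Grouping the tuples of
`C₂` by `H`, a group has at most `|A|^l` members, each contributing at most
`|M|^|u| · ((1 + ε) / |H|)^l` (as `1 / |M| ≤ ‖f‖_∞ ≤ 1` and `k' = l + u`); this gives
`|M|^|u| · ((1 + ε) / p)^l` per subgroup `H` of `M`.
-/

noncomputable section

-- The law of `Σ_i m_i ξ_i` where `ξ_1, …, ξ_l` are i.i.d. of law `μ`.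
open Classical in
noncomputable def tupleLaw {R : Type} [CommRing R] [Fintype R]
    {M : Type} [AddCommGroup M] [Module R M] {l : ℕ}
    (μ : R → ℝ) (m : Fin l → M) (a : M) : ℝ :=
  ∑ x ∈ Finset.univ.filter (fun x : Fin l → R => ∑ i, x i • m i = a),
    ∏ i, μ (x i)

/-- The Fourier coefficient of a distribution `f` on the finite abelian group
`M` at an additive character `χ`. -/
noncomputable def fCoeff {M : Type} [AddCommGroup M] [Fintype M]
    (f : M → ℝ) (χ : AddChar M ℂ) : ℂ :=
  ∑ a : M, (f a : ℂ) * χ a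

/-- Membership in the class `C₂`: the tuple spans `M`, every Fourier
coefficient of `Σ m_i ξ_i` is either `1` or of absolute value `≤ ε/|M|`,
and some nontrivial Fourier coefficient equals `1`. -/
def InC2 {R : Type} [CommRing R] [Fintype R]
    {M : Type} [AddCommGroup M] [Module R M] [Fintype M] {l : ℕ}
    (μ : R → ℝ) (ε : ℝ) (m : Fin l → M) : Prop :=
  Submodule.span R (Set.range m) = ⊤ ∧
  (∀ χ : AddChar M ℂ, fCoeff (tupleLaw μ m) χ = 1 ∨
      ‖fCoeff (tupleLaw μ m) χ‖ ≤ ε / (Fintype.card M : ℝ)) ∧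
  (∃ χ : AddChar M ℂ, χ ≠ 1 ∧ fCoeff (tupleLaw μ m) χ = 1)

open Finset Function

section TupleLaw

variable {R M : Type} [CommRing R] [Fintype R] [AddCommGroup M] [Module R M]
  {l : ℕ} {μ : R → ℝ}

lemma tupleLaw_nonneg (hμ : ∀ r, 0 ≤ μ r) (m : Fin l → M) (a : M) : 0 ≤ tupleLaw μ m a :=
  sum_nonneg fun _ _ ↦ prod_nonneg fun _ _ ↦ hμ _

lemma sum_tupleLaw [Fintype M] (hμ : ∑ r, μ r = 1) (m : Fin l → M) :
    ∑ a, tupleLaw μ m a = 1 := by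
  classical
  simp only [tupleLaw]
  convert sum_fiberwise univ (fun x : Fin l → R ↦ ∑ i, x i • m i) (fun x ↦ ∏ i, μ (x i))
  rw [← Fintype.sum_pow, hμ, one_pow]

lemma prod_le_tupleLaw (hμ : ∀ r, 0 ≤ μ r) (m : Fin l → M) (x : Fin l → R) :
    ∏ i, μ (x i) ≤ tupleLaw μ m (∑ i, x i • m i) := by
  classical
  exact single_le_sum (f := fun x : Fin l → R ↦ ∏ i, μ (x i))
    (fun _ _ ↦ prod_nonneg fun _ _ ↦ hμ _) (by simp)

lemma tupleLaw_smul_ne_zero (hμ : ∀ r, 0 ≤ μ r) (hμ0 : μ 0 ≠ 0) {r : R} (hr : μ r ≠ 0)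
    (m : Fin l → M) (i : Fin l) : tupleLaw μ m (r • m i) ≠ 0 := by
  classical
  set x : Fin l → R := Pi.single i r
  have hpos : 0 < ∏ j, μ (x j) := prod_pos fun j _ ↦ by
    rcases eq_or_ne j i with rfl | hj
    · simpa [x] using (hμ r).lt_of_ne' hr
    · simpa [x, hj] using (hμ 0).lt_of_ne' hμ0
  have hsum : ∑ j, x j • m j = r • m i :=
    (Fintype.sum_eq_single i fun j hj ↦ by simp [x, hj]).trans (by simp [x])
  exact (hpos.trans_le (hsum ▸ prod_le_tupleLaw hμ m _)).ne'

end TupleLaw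

namespace AddChar

variable {M : Type} [AddCommGroup M]

def annihilator (S : Set M) : Subgroup (AddChar M ℂ) where
  carrier := {χ | ∀ a ∈ S, χ a = 1}
  one_mem' _ _ := one_apply _
  mul_mem' hχ hψ a ha := by rw [mul_apply, hχ a ha, hψ a ha, one_mul]
  inv_mem' hχ a ha := by rw [inv_apply', hχ a ha, inv_one]

def commonKer (Γ : Subgroup (AddChar M ℂ)) : AddSubgroup M where
  carrier := {a | ∀ χ ∈ Γ, χ a = 1}
  zero_mem' _ _ := map_zero_eq_one _
  add_mem' ha hb χ hχ := by rw [map_add_eq_mul, ha χ hχ, hb χ hχ, one_mul]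
  neg_mem' ha χ hχ := by rw [map_neg_eq_inv, ha χ hχ, inv_one]

lemma subset_commonKer_annihilator (S : Set M) : S ⊆ commonKer (annihilator S) :=
  fun a ha _ hχ ↦ hχ a ha

lemma sum_subgroup_apply_eq_ite (Γ : Subgroup (AddChar M ℂ)) [Fintype Γ] (a : M)
    [Decidable (a ∈ commonKer Γ)] :
    ∑ χ : Γ, (χ : AddChar M ℂ) a = if a ∈ commonKer Γ then (Fintype.card Γ : ℂ) else 0 := by
  split_ifs with ha
  · simp [fun χ : Γ ↦ ha χ χ.2]
  · obtain ⟨χ₀, hχ₀, hχ₀a⟩ : ∃ χ₀ ∈ Γ, χ₀ a ≠ 1 := by simpa [commonKer] using ha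
    -- translating by `χ₀` permutes `Γ`
    have htrans : χ₀ a * ∑ χ : Γ, (χ : AddChar M ℂ) a = ∑ χ : Γ, (χ : AddChar M ℂ) a := by
      rw [mul_sum]
      simpa using Equiv.sum_comp (Equiv.mulLeft (⟨χ₀, hχ₀⟩ : Γ)) fun χ : Γ ↦ (χ : AddChar M ℂ) a
    have : (χ₀ a - 1) * ∑ χ : Γ, (χ : AddChar M ℂ) a = 0 := by rw [sub_mul, htrans]; ring
    exact (mul_eq_zero.1 this).resolve_left (sub_ne_zero.2 hχ₀a)

lemma card_mul_card_commonKer [Fintype M] (Γ : Subgroup (AddChar M ℂ)) :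
    Nat.card Γ * Nat.card (commonKer Γ) = Fintype.card M := by
  classical
  have hΓ : ∑ χ : Γ, ∑ a, (χ : AddChar M ℂ) a = Fintype.card M := by
    simp_rw [AddChar.sum_eq_ite]
    rw [Fintype.sum_eq_single (1 : Γ) fun χ hχ ↦
      if_neg (show (χ : AddChar M ℂ) ≠ 0 from fun h ↦ hχ (Subtype.ext h))]
    exact if_pos one_eq_zero
  have hK : ∑ a, ∑ χ : Γ, (χ : AddChar M ℂ) a = Fintype.card Γ * Fintype.card (commonKer Γ) := by
    simp_rw [sum_subgroup_apply_eq_ite, sum_ite, sum_const_zero, add_zero,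
      sum_const, nsmul_eq_mul, mul_comm]
    simp [Fintype.card_subtype]
  rw [Nat.card_eq_fintype_card, Nat.card_eq_fintype_card]
  exact_mod_cast hK.symm.trans (sum_comm.trans hΓ)

end AddChar

section Fourier

variable {M : Type} [AddCommGroup M] [Fintype M] {f : M → ℝ}

lemma fCoeff_eq_one_iff (hf0 : ∀ a, 0 ≤ f a) (hf1 : ∑ a, f a = 1) {χ : AddChar M ℂ} :
    fCoeff f χ = 1 ↔ χ ∈ AddChar.annihilator (support f) := by
  constructor
  · intro h a ha
    have hterm : ∀ b, 0 ≤ f b * (1 - (χ b).re) := fun b ↦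
      mul_nonneg (hf0 b) (sub_nonneg.2 ((χ b).re_le_norm.trans_eq (χ.norm_apply b)))
    have hsum : ∑ b, f b * (1 - (χ b).re) = 0 := by
      have hre : ∑ b, f b * (χ b).re = 1 := by
        simpa [fCoeff, Complex.re_sum] using congrArg Complex.re h
      simp [mul_sub, sum_sub_distrib, hf1, hre]
    have hre : (χ a).re = 1 := by
      have := congrFun ((Fintype.sum_eq_zero_iff_of_nonneg hterm).1 hsum) a
      linarith [(mul_eq_zero.1 this).resolve_left ha]
    obtain ⟨-, him⟩ := Complex.nonneg_iff.1 (Complex.re_eq_norm.1 (by rw [hre, χ.norm_apply]))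
    exact Complex.ext hre him.symm
  · intro h
    calc fCoeff f χ = ∑ a, (f a : ℂ) := sum_congr rfl fun a _ ↦ by
          by_cases ha : f a = 0
          · simp [ha]
          · rw [h a ha, mul_one]
      _ = 1 := by exact_mod_cast hf1

lemma mul_card_eq_sum_fCoeff (f : M → ℝ) (a : M) :
    (f a : ℂ) * Fintype.card M = ∑ χ : AddChar M ℂ, fCoeff f χ * χ (-a) := by
  classical
  simp_rw [fCoeff, sum_mul, mul_assoc, ← AddChar.map_add_eq_mul]
  rw [sum_comm]
  simp_rw [← mul_sum, AddChar.sum_apply_eq_ite, add_neg_eq_zero, mul_ite, mul_zero]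
  simp

lemma sum_norm_fCoeff_le (hf0 : ∀ a, 0 ≤ f a) (hf1 : ∑ a, f a = 1) {ε : ℝ} (hε : 0 ≤ ε)
    (hsmall : ∀ χ : AddChar M ℂ, fCoeff f χ = 1 ∨ ‖fCoeff f χ‖ ≤ ε / Fintype.card M) :
    ∑ χ : AddChar M ℂ, ‖fCoeff f χ‖ ≤ Nat.card (AddChar.annihilator (support f)) + ε := by
  classical
  calc ∑ χ : AddChar M ℂ, ‖fCoeff f χ‖
      ≤ ∑ χ : AddChar M ℂ,
          ((if χ ∈ AddChar.annihilator (support f) then 1 else 0) + ε / Fintype.card M) := by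
        refine sum_le_sum fun χ _ ↦ ?_
        rcases hsmall χ with h | h
        · rw [if_pos ((fCoeff_eq_one_iff hf0 hf1).1 h), h, norm_one]
          have : 0 ≤ ε / Fintype.card M := by positivity
          linarith
        · split_ifs <;> linarith
    _ = Nat.card (AddChar.annihilator (support f)) + ε := by
        rw [sum_add_distrib, sum_boole, sum_const, card_univ, AddChar.card_eq, nsmul_eq_mul,
          mul_div_cancel₀ _ (by positivity), Nat.card_eq_fintype_card, Fintype.card_subtype]

lemma apply_le_of_fCoeff_eq_one_or_norm_le (hf0 : ∀ a, 0 ≤ f a) (hf1 : ∑ a, f a = 1)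
    {ε : ℝ} (hε : 0 ≤ ε)
    (hsmall : ∀ χ : AddChar M ℂ, fCoeff f χ = 1 ∨ ‖fCoeff f χ‖ ≤ ε / Fintype.card M) (a : M) :
    f a ≤ (1 + ε) / Nat.card (AddChar.commonKer (AddChar.annihilator (support f))) := by
  set Γ := AddChar.annihilator (support f)
  have hinv : f a * Fintype.card M ≤ Nat.card Γ + ε := by
    have := congrArg norm (mul_card_eq_sum_fCoeff f a)
    rw [norm_mul, Complex.norm_real, Complex.norm_natCast, Real.norm_of_nonneg (hf0 a)] at this
    refine this.trans_le ((norm_sum_le _ _).trans ?_)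
    simpa using sum_norm_fCoeff_le hf0 hf1 hε hsmall
  have hcard : (Nat.card Γ : ℝ) * Nat.card (AddChar.commonKer Γ) = Fintype.card M := by
    exact_mod_cast AddChar.card_mul_card_commonKer Γ
  have hΓ : (1 : ℝ) ≤ Nat.card Γ := by exact_mod_cast Nat.card_pos (α := Γ)
  rw [le_div_iff₀ (by exact_mod_cast Nat.card_pos),
    ← mul_le_mul_iff_right₀ (by linarith : (0 : ℝ) < Nat.card Γ)]
  calc (Nat.card Γ : ℝ) * (f a * Nat.card (AddChar.commonKer Γ)) = f a * Fintype.card M := by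
        rw [← hcard]; ring
    _ ≤ Nat.card Γ + ε := hinv
    _ ≤ Nat.card Γ * (1 + ε) := by nlinarith

end Fourier

section Distribution

variable {M : Type} [AddCommGroup M] [Fintype M] {f : M → ℝ}

lemma inv_card_le_ciSup (hf1 : ∑ a, f a = 1) : (Fintype.card M : ℝ)⁻¹ ≤ ⨆ a, f a := by
  have : 1 ≤ (⨆ a, f a) * Fintype.card M := by
    simpa [← hf1, mul_comm] using sum_le_sum fun a (_ : a ∈ univ) ↦
      le_ciSup (Finite.bddAbove_range f) a
  exact (inv_le_iff_one_le_mul₀ (by exact_mod_cast Fintype.card_pos)).2 this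

lemma ciSup_le_one (hf0 : ∀ a, 0 ≤ f a) (hf1 : ∑ a, f a = 1) : ⨆ a, f a ≤ 1 :=
  ciSup_le fun a ↦ hf1 ▸ single_le_sum (fun b _ ↦ hf0 b) (mem_univ a)

end Distribution

section Arith

lemma pow_le_pow_natAbs_mul_pow {s b N : ℝ} (hs : N⁻¹ ≤ s) (hs1 : s ≤ 1) (hsb : s ≤ b)
    (hN : 0 < N) {k l : ℕ} {u : ℤ} (hk : (k : ℤ) = l + u) :
    s ^ k ≤ N ^ u.natAbs * b ^ l := by
  have hs0 : 0 < s := (inv_pos.2 hN).trans_le hs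
  have hsplit : s ^ k = s ^ u * s ^ l := by
    rw [← zpow_natCast, hk, zpow_add₀ hs0.ne', zpow_natCast, mul_comm]
  have hsu : s ^ u ≤ N ^ u.natAbs := by
    obtain ⟨n, rfl | rfl⟩ := Int.eq_nat_or_neg u
    · have hN1 : 1 ≤ N := (inv_le_one₀ hN).1 (hs.trans hs1)
      simpa using (pow_le_one₀ hs0.le hs1).trans (one_le_pow₀ hN1)
    · simpa using pow_le_pow_left₀ (inv_nonneg.2 hs0.le) ((inv_le_comm₀ hs0 hN).2 hs) n
  rw [hsplit]
  exact mul_le_mul hsu (pow_le_pow_left₀ hs0.le hsb l) (by positivity) (by positivity)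

end Arith

section PGroup

lemma prime_mul_card_le_card_of_lt {p t : ℕ} (hp : p.Prime) {M : Type} [AddGroup M]
    (hM : Nat.card M = p ^ t) {A H : AddSubgroup M} (hAH : A < H) :
    p * Nat.card A ≤ Nat.card H := by
  have : Finite M := Nat.finite_of_card_ne_zero (by simp [hM, hp.ne_zero])
  obtain ⟨d, hd⟩ := AddSubgroup.card_dvd_of_le hAH.le
  have hdvd : d ∣ p ^ t :=
    hM ▸ (Dvd.intro_left _ hd.symm).trans (AddSubgroup.card_addSubgroup_dvd_card H)
  obtain ⟨j, -, rfl⟩ := (Nat.dvd_prime_pow hp).1 hdvd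
  have hj : j ≠ 0 := by
    rintro rfl
    exact hAH.ne (AddSubgroup.eq_of_le_of_card_ge hAH.le (by simp [hd]))
  rw [hd, mul_comm]
  exact Nat.mul_le_mul_left _ (Nat.le_self_pow hj p)

lemma exists_card_eq_pow_of_charP_residueField (R : Type) [CommRing R] [Finite R]
    [IsLocalRing R] {p : ℕ} [CharP (IsLocalRing.ResidueField R) p] (hp : p.Prime)
    (M : Type) [AddCommGroup M] [Module R M] [Finite M] : ∃ t, Nat.card M = p ^ t := by
  have : Fact p.Prime := ⟨hp⟩
  have hpmem : (p : R) ∈ IsLocalRing.maximalIdeal R := by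
    rw [← IsLocalRing.residue_eq_zero_iff, map_natCast, CharP.cast_eq_zero]
  obtain ⟨n, hn⟩ := Ring.KrullDimLE.isNilpotent_iff_mem_nonunits.2 hpmem
  refine (IsPGroup.iff_card (G := Multiplicative M)).1 fun a ↦ ⟨n, ?_⟩
  change (p ^ n) • a.toAdd = 0
  rw [← Nat.cast_smul_eq_nsmul R, Nat.cast_pow, hn, zero_smul]

end PGroup

section SmulComap

variable {R M : Type} [Ring R] [AddCommGroup M] [Module R M]

variable (R) in
def smulStabilizer (H : AddSubgroup M) : Subring R where
  carrier := {r | ∀ a ∈ H, r • a ∈ H}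
  one_mem' a ha := by rwa [one_smul]
  mul_mem' hr hs a ha := by rw [mul_smul]; exact hr _ (hs a ha)
  zero_mem' a _ := by rw [zero_smul]; exact H.zero_mem
  add_mem' hr hs a ha := by rw [add_smul]; exact H.add_mem (hr a ha) (hs a ha)
  neg_mem' hr a ha := by rw [neg_smul]; exact H.neg_mem (hr a ha)

def smulComap (S : Set R) (H : AddSubgroup M) : AddSubgroup M where
  carrier := {a | ∀ r ∈ S, r • a ∈ H}
  zero_mem' r _ := by rw [smul_zero]; exact H.zero_mem
  add_mem' ha hb r hr := by rw [smul_add]; exact H.add_mem (ha r hr) (hb r hr)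
  neg_mem' ha r hr := by rw [smul_neg]; exact H.neg_mem (ha r hr)

lemma smulComap_lt {S : Set R} (hS1 : (1 : R) ∈ S) (hS : Subring.closure S = ⊤)
    {H : AddSubgroup M} (hH : H ≠ ⊤) {ι : Type} {m : ι → M}
    (hm : Submodule.span R (Set.range m) = ⊤) (hmH : ∀ i, m i ∈ smulComap S H) :
    smulComap S H < H := by
  have hle : smulComap S H ≤ H := fun a ha ↦ one_smul R a ▸ ha 1 hS1
  refine hle.lt_of_ne fun hEq ↦ hH ?_
  have hstab : smulStabilizer R H = ⊤ :=
    top_le_iff.1 (hS ▸ Subring.closure_le.2 fun r hr a ha ↦ hEq.ge ha r hr)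
  let N : Submodule R M :=
    { H with smul_mem' := fun r a ha ↦ (hstab ▸ Subring.mem_top r : r ∈ smulStabilizer R H) a ha }
  have hN : N = ⊤ := top_le_iff.1 <| hm ▸ Submodule.span_le.2 <|
    Set.range_subset_iff.2 fun i ↦ hle (hmH i)
  exact (AddSubgroup.eq_top_iff' H).2 fun a ↦ (hN ▸ Submodule.mem_top : a ∈ N)

end SmulComap

section C2

variable {R M : Type} [CommRing R] [Fintype R] [AddCommGroup M] [Module R M]
  {l : ℕ} {μ : R → ℝ} {ε : ℝ}

/-- The common kernel of the characters whose Fourier coefficient at the law of `Σ mᵢ ξᵢ` is `1`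
(see `fCoeff_eq_one_iff`). -/
def lawKer (μ : R → ℝ) (m : Fin l → M) : AddSubgroup M :=
  AddChar.commonKer (AddChar.annihilator (support (tupleLaw μ m)))

lemma apply_mem_smulComap_lawKer (hμ : ∀ r, 0 ≤ μ r) (hμ0 : μ 0 ≠ 0) (m : Fin l → M)
    (i : Fin l) : m i ∈ smulComap (support μ) (lawKer μ m) := fun _ hr ↦
  AddChar.subset_commonKer_annihilator _ (tupleLaw_smul_ne_zero hμ hμ0 hr m i)

variable [Fintype M] {m : Fin l → M}

lemma InC2.lawKer_ne_top (hμ : ∀ r, 0 ≤ μ r) (hμsum : ∑ r, μ r = 1) (h : InC2 μ ε m) :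
    lawKer μ m ≠ ⊤ := by
  obtain ⟨χ, hχ1, hχ⟩ := h.2.2
  obtain ⟨a, ha⟩ := AddChar.ne_one_iff.1 hχ1
  intro htop
  exact ha ((htop ▸ AddSubgroup.mem_top a : a ∈ lawKer μ m) χ
    ((fCoeff_eq_one_iff (tupleLaw_nonneg hμ m) (sum_tupleLaw hμsum m)).1 hχ))

lemma InC2.smulComap_lawKer_lt (hμ : ∀ r, 0 ≤ μ r) (hμsum : ∑ r, μ r = 1) (hμ0 : μ 0 ≠ 0)
    (hμ1 : μ 1 ≠ 0) (hgen : Subring.closure (support μ) = ⊤) (h : InC2 μ ε m) :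
    smulComap (support μ) (lawKer μ m) < lawKer μ m :=
  smulComap_lt hμ1 hgen (h.lawKer_ne_top hμ hμsum) h.1 (apply_mem_smulComap_lawKer hμ hμ0 m)

lemma InC2.ciSup_pow_le (hμ : ∀ r, 0 ≤ μ r) (hμsum : ∑ r, μ r = 1) (hε : 0 ≤ ε)
    (h : InC2 μ ε m) {k : ℕ} {u : ℤ} (hk : (k : ℤ) = l + u) :
    (⨆ a, tupleLaw μ m a) ^ k
      ≤ (Fintype.card M : ℝ) ^ u.natAbs * ((1 + ε) / Nat.card (lawKer μ m)) ^ l :=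
  pow_le_pow_natAbs_mul_pow (inv_card_le_ciSup (sum_tupleLaw hμsum m))
    (ciSup_le_one (tupleLaw_nonneg hμ m) (sum_tupleLaw hμsum m))
    (ciSup_le (apply_le_of_fCoeff_eq_one_or_norm_le (tupleLaw_nonneg hμ m) (sum_tupleLaw hμsum m)
      hε h.2.1))
    (by exact_mod_cast Fintype.card_pos) hk

lemma card_filter_lawKer_eq_le [DecidableEq (AddSubgroup M)] (hμ : ∀ r, 0 ≤ μ r)
    (hμ0 : μ 0 ≠ 0) (s : Finset (Fin l → M)) (H : AddSubgroup M) :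
    #{m ∈ s | lawKer μ m = H} ≤ Nat.card (smulComap (support μ) H) ^ l := by
  classical
  calc #{m ∈ s | lawKer μ m = H}
      ≤ #(Fintype.piFinset fun _ : Fin l ↦ (smulComap (support μ) H : Set M).toFinset) :=
        card_le_card fun m hm ↦ by
          obtain ⟨-, rfl⟩ := mem_filter.1 hm
          simpa using apply_mem_smulComap_lawKer hμ hμ0 m
    _ = Nat.card (smulComap (support μ) H) ^ l := by
        simp [Nat.card_eq_fintype_card]

lemma sum_filter_lawKer_eq_le [DecidableEq (AddSubgroup M)] {p t : ℕ} (hp : p.Prime)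
    (hM : Nat.card M = p ^ t) (hμ : ∀ r, 0 ≤ μ r) (hμsum : ∑ r, μ r = 1) (hμ0 : μ 0 ≠ 0)
    (hμ1 : μ 1 ≠ 0) (hgen : Subring.closure (support μ) = ⊤) (hε : 0 ≤ ε)
    {s : Finset (Fin l → M)} (hs : ∀ m ∈ s, InC2 μ ε m) {k : ℕ} {u : ℤ}
    (hk : (k : ℤ) = l + u) (H : AddSubgroup M) :
    ∑ m ∈ s with lawKer μ m = H, (⨆ a, tupleLaw μ m a) ^ k
      ≤ (Fintype.card M : ℝ) ^ u.natAbs * ((1 + ε) / p) ^ l := by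
  rcases (s.filter (lawKer μ · = H)).eq_empty_or_nonempty with hempty | ⟨m₀, hm₀⟩
  · rw [hempty, sum_empty]
    positivity
  obtain ⟨hm₀s, rfl⟩ := mem_filter.1 hm₀
  have hpA :
      (p : ℝ) * Nat.card (smulComap (support μ) (lawKer μ m₀)) ≤ Nat.card (lawKer μ m₀) := by
    exact_mod_cast prime_mul_card_le_card_of_lt hp hM
      ((hs m₀ hm₀s).smulComap_lawKer_lt hμ hμsum hμ0 hμ1 hgen)
  have hH : (0 : ℝ) < Nat.card (lawKer μ m₀) := by exact_mod_cast Nat.card_pos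
  calc ∑ m ∈ s with lawKer μ m = lawKer μ m₀, (⨆ a, tupleLaw μ m a) ^ k
      ≤ ∑ m ∈ s with lawKer μ m = lawKer μ m₀,
          (Fintype.card M : ℝ) ^ u.natAbs * ((1 + ε) / Nat.card (lawKer μ m₀)) ^ l :=
        sum_le_sum fun m hm ↦ by
          obtain ⟨hms, hmH⟩ := mem_filter.1 hm
          simpa only [hmH] using (hs m hms).ciSup_pow_le hμ hμsum hε hk
    _ ≤ Nat.card (smulComap (support μ) (lawKer μ m₀)) ^ l *
          ((Fintype.card M : ℝ) ^ u.natAbs * ((1 + ε) / Nat.card (lawKer μ m₀)) ^ l) := by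
        rw [sum_const, nsmul_eq_mul]
        gcongr
        exact_mod_cast card_filter_lawKer_eq_le hμ hμ0 s _
    _ = (Fintype.card M : ℝ) ^ u.natAbs *
          (Nat.card (smulComap (support μ) (lawKer μ m₀)) *
            ((1 + ε) / Nat.card (lawKer μ m₀))) ^ l := by
        rw [mul_pow]; ring
    _ ≤ (Fintype.card M : ℝ) ^ u.natAbs * ((1 + ε) / p) ^ l := by
        have hbase : Nat.card (smulComap (support μ) (lawKer μ m₀)) *
            ((1 + ε) / Nat.card (lawKer μ m₀)) ≤ (1 + ε) / p := by
          rw [mul_div_assoc', div_le_div_iff₀ hH (by exact_mod_cast hp.pos)]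
          nlinarith
        gcongr

end C2

/-- **The `C₂` bound.** The constant `C` depends only on `M` and `u`
(and on `R`). -/
theorem c2_sum_bound
    (R : Type) [CommRing R] [Fintype R] [IsLocalRing R]
    (p : ℕ) (hp : CharP (IsLocalRing.ResidueField R) p)
    (M : Type) [AddCommGroup M] [Module R M] [Fintype M]
    (u : ℤ) :
    ∃ C : ℝ, ∀ ε : ℝ, 0 < ε →
      ∀ μ : R → ℝ, (∀ r, 0 ≤ μ r) → (∑ r, μ r = 1) →
        μ 0 ≠ 0 → μ 1 ≠ 0 →
        (∀ S : Subring R, S ≠ ⊤ → ¬ (∀ x : R, μ x ≠ 0 → x ∈ S)) →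
        ∀ l k' : ℕ, 1 ≤ k' → (k' : ℤ) = (l : ℤ) + u →
          (open Classical in
          ∑ m ∈ Finset.univ.filter (fun m : Fin l → M => InC2 μ ε m),
            (⨆ a : M, tupleLaw μ m a) ^ k')
          ≤ C * ((1 + ε) / (p : ℝ)) ^ l := by
  classical
  have := hp
  have : Finite (IsLocalRing.ResidueField R) :=
    Finite.of_surjective _ IsLocalRing.residue_surjective
  have hp' : p.Prime := CharP.char_is_prime (IsLocalRing.ResidueField R) p
  obtain ⟨t, hM⟩ := exists_card_eq_pow_of_charP_residueField R hp' M
  refine ⟨Nat.card (AddSubgroup M) * (Fintype.card M : ℝ) ^ u.natAbs, ?_⟩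
  intro ε hε μ hμ hμsum hμ0 hμ1 hgen l k' _ hk
  have hclosure : Subring.closure (support μ) = ⊤ := by
    by_contra h
    exact hgen _ h fun x hx ↦ Subring.subset_closure hx
  rw [← sum_fiberwise _ (lawKer μ)]
  calc _ ≤ ∑ _H : AddSubgroup M, (Fintype.card M : ℝ) ^ u.natAbs * ((1 + ε) / p) ^ l :=
        sum_le_sum fun H _ ↦ sum_filter_lawKer_eq_le hp' hM hμ hμsum hμ0 hμ1 hclosure hε.le
          (fun m hm ↦ (mem_filter.1 hm).2) hk H
    _ = _ := by simp [Nat.card_eq_fintype_card, mul_assoc]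

end
end

section
/- Let R be a finite commutative local ring whose residue field R/𝔪 has characteristic p, let M be a finite R-module, and let S ⊆ R be a subset containing 1 that is not contained in any proper subring of R. If π is an additive subgroup of M that is not an R-submodule, then #{m ∈ M : mS ⊆ π} ≤ |π|/p. -/
/-!
If `R` is a finite local ring with residue characteristic `p`, `S ⊆ R`
contains `1` and is not contained in any proper subring, and `π` is an
additive subgroup of the finite `R`-module `M` that is not an `R`-submodule,
then `#{m : mS ⊆ π} ≤ |π|/p`.
-/

private def stabSubring {R M : Type} [CommRing R] [AddCommGroup M] [Module R M]
    (π : AddSubgroup M) : Subring R where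
  carrier := {r : R | ∀ x ∈ π, r • x ∈ π}
  one_mem' := fun x hx => by simpa using hx
  mul_mem' := fun ha hb x hx => by rw [mul_smul]; exact ha _ (hb x hx)
  add_mem' := fun {a b} ha hb x hx => by
    rw [add_smul]; exact π.add_mem (ha x hx) (hb x hx)
  zero_mem' := fun x hx => by rw [zero_smul]; exact π.zero_mem
  neg_mem' := fun {a} ha x hx => by rw [neg_smul]; exact π.neg_mem (ha x hx)

/-- **Cardinality bound when `π` is not a submodule.** -/
theorem card_smulSet_subset_le
    (R : Type) [CommRing R] [Fintype R] [IsLocalRing R]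
    (p : ℕ) (hp : CharP (IsLocalRing.ResidueField R) p)
    (M : Type) [AddCommGroup M] [Module R M] [Fintype M]
    (S : Set R) (h1 : (1 : R) ∈ S)
    (hS : ∀ T : Subring R, S ⊆ (T : Set R) → T = ⊤)
    (π : AddSubgroup M)
    (hπ : ¬ (∀ (r : R), ∀ x ∈ π, r • x ∈ π)) :
    (Nat.card {m : M | ∀ s ∈ S, s • m ∈ π} : ℝ) ≤ (Nat.card π : ℝ) / (p : ℝ) := by
  classical
  set k := IsLocalRing.ResidueField R with hk
  haveI : Finite k := Finite.of_surjective _ (IsLocalRing.residue_surjective (R := R))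
  haveI : Fintype k := Fintype.ofFinite k
  have hpp : p.Prime := CharP.char_is_prime k p
  set c := ringChar R with hcdef
  have hc0 : c ≠ 0 := CharP.char_ne_zero_of_finite R c
  -- every prime dividing c is p
  have hprimes : ∀ {q : ℕ}, q.Prime → q ∣ c → q = p := by
    intro q hq hqc
    by_contra hne
    have hpq : ¬ p ∣ q := fun h => hne ((Nat.prime_dvd_prime_iff_eq hpp hq).mp h).symm
    have hqk : (q : k) ≠ 0 := fun h => hpq ((CharP.cast_eq_zero_iff k p q).mp h)
    have hunit : IsUnit (q : R) := by
      by_contra hnu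
      have hmem : (q : R) ∈ IsLocalRing.maximalIdeal R := hnu
      have h0 : IsLocalRing.residue R (q : R) = 0 :=
        (Ideal.Quotient.eq_zero_iff_mem).mpr hmem
      rw [map_natCast] at h0
      exact hqk h0
    have hdivpos : 0 < c / q :=
      Nat.div_pos (Nat.le_of_dvd (Nat.pos_of_ne_zero hc0) hqc) hq.pos
    have hdivlt : c / q < c := Nat.div_lt_self (Nat.pos_of_ne_zero hc0) hq.one_lt
    have ha : ((c / q : ℕ) : R) ≠ 0 := by
      intro h
      have := (CharP.cast_eq_zero_iff R c (c / q)).mp h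
      exact absurd (Nat.le_of_dvd hdivpos this) (not_le.mpr hdivlt)
    have hz : (q : R) * ((c / q : ℕ) : R) = 0 := by
      rw [← Nat.cast_mul, Nat.mul_div_cancel' hqc]
      exact CharP.cast_eq_zero R c
    apply ha
    obtain ⟨u, hu⟩ := hunit
    have := congrArg (fun x => (↑u⁻¹ : R) * x) hz
    simpa [← hu, ← mul_assoc] using this
  have hcpow : c = p ^ c.primeFactorsList.length :=
    Nat.eq_prime_pow_of_unique_prime_dvd hc0 hprimes
  -- the subgroup N
  set N : AddSubgroup M :=
    { carrier := {m : M | ∀ s ∈ S, s • m ∈ π}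
      zero_mem' := by intro s _; rw [smul_zero]; exact π.zero_mem
      add_mem' := by
        intro a b ha hb s hs
        rw [smul_add]; exact π.add_mem (ha s hs) (hb s hs)
      neg_mem' := by
        intro a ha s hs
        rw [smul_neg]; exact π.neg_mem (ha s hs) } with hN
  have hNle : N ≤ π := fun m hm => by simpa using hm 1 h1
  -- π is not contained in N
  have hπN : ¬ π ≤ N := by
    intro hle
    apply hπ
    have hT : (stabSubring (R := R) π) = ⊤ := hS _ (fun s hs x hx => hle hx s hs)
    intro r x hx
    have hr : r ∈ (stabSubring (R := R) π) := hT ▸ trivial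
    exact hr x hx
  obtain ⟨y, hyπ, hyN⟩ := SetLike.not_le_iff_exists.mp hπN
  -- work in π
  set K : AddSubgroup π := N.addSubgroupOf π with hK
  -- every element of M is killed by c
  have hkill : ∀ x : M, c • x = 0 := by
    intro x
    rw [← Nat.cast_smul_eq_nsmul R c x, CharP.cast_eq_zero R c, zero_smul]
  -- p divides the index of K
  have hpind : p ∣ K.index := by
    have hidx : K.index = Nat.card (π ⧸ K) := rfl
    rw [hidx]
    set q : π ⧸ K := QuotientAddGroup.mk (⟨y, hyπ⟩ : π) with hq
    have hq0 : q ≠ 0 := by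
      rw [hq]
      intro h
      exact hyN (AddSubgroup.mem_addSubgroupOf.mp
        ((QuotientAddGroup.eq_zero_iff (⟨y, hyπ⟩ : π)).mp h))
    have hqc : c • q = 0 := by
      rw [hq, ← QuotientAddGroup.mk_nsmul]
      have : c • (⟨y, hyπ⟩ : π) = 0 := by
        ext; simpa using hkill y
      rw [this, QuotientAddGroup.mk_zero]
    have hd : addOrderOf q ∣ c := addOrderOf_dvd_of_nsmul_eq_zero hqc
    have hd1 : addOrderOf q ≠ 1 := fun h =>
      hq0 (AddMonoid.addOrderOf_eq_one_iff.mp h)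
    have hdpow : addOrderOf q ∣ p ^ c.primeFactorsList.length := hcpow ▸ hd
    obtain ⟨i, _, hdi⟩ := (Nat.dvd_prime_pow hpp).mp hdpow
    have hi0 : i ≠ 0 := by rintro rfl; rw [pow_zero] at hdi; exact hd1 hdi
    have hp_dvd_d : p ∣ addOrderOf q := hdi ▸ dvd_pow_self p hi0
    exact hp_dvd_d.trans (addOrderOf_dvd_natCard q)
  have hind0 : K.index ≠ 0 := AddSubgroup.index_ne_zero_of_finite
  have hple : p ≤ K.index := Nat.le_of_dvd (Nat.pos_of_ne_zero hind0) hpind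
  have hcard : Nat.card K * K.index = Nat.card π := AddSubgroup.card_mul_index K
  have hKN : Nat.card K = Nat.card N :=
    Nat.card_congr (AddSubgroup.addSubgroupOfEquivOfLe hNle).toEquiv
  have hNset : Nat.card {m : M | ∀ s ∈ S, s • m ∈ π} = Nat.card N := rfl
  have hmain : Nat.card N * p ≤ Nat.card π := by
    calc Nat.card N * p = Nat.card K * p := by rw [hKN]
    _ ≤ Nat.card K * K.index := Nat.mul_le_mul_left _ hple
    _ = Nat.card π := hcard
  rw [hNset, le_div_iff₀ (by exact_mod_cast hpp.pos)]
  exact_mod_cast hmain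
end

section
/- Let R be a finite commutative local ring with maximal ideal 𝔪 and residue field of characteristic p, and let M be a finite R-module. Let ξ be an R-valued random variable of law μ whose support contains 0, let π be an additive subgroup of M, and let m ∈ M be such that the support of mξ is not contained in π. Let α be the smallest nonzero value of P(ξ ≡ r mod ann(M)) over r ∈ R, and define β by max(‖μ mod 𝔪‖_∞, 1/p) = 1 − β. Then the M/π-valued random variable (mξ mod π) takes at least two distinct values with positive probability; moreover ‖mξ mod π‖_∞ ≤ 1 − α, and if π is an R-submodule of M then ‖mξ mod π‖_∞ ≤ ‖ξ mod 𝔪‖_∞ ≤ 1 − β. -/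
/-!
Properties of the random variable `mξ mod π`: it takes at least two distinct
values with positive probability; its maximal point mass is at most `1 − α`;
and, if `π` is an `R`-submodule, at most `‖ξ mod 𝔪‖_∞ ≤ 1 − β`.
-/

noncomputable section

-- The pushforward to the residue field of a distribution `μ` on `R`.
open Classical in
noncomputable def resLaw (R : Type) [CommRing R] [Fintype R] [IsLocalRing R]
    (μ : R → ℝ) (c : IsLocalRing.ResidueField R) : ℝ :=
  ∑ x ∈ Finset.univ.filter (fun x => IsLocalRing.residue R x = c), μ x

-- The `l^∞` norm of `μ mod 𝔪` (its maximal point mass).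
noncomputable def linfRes (R : Type) [CommRing R] [Fintype R] [IsLocalRing R]
    (μ : R → ℝ) : ℝ :=
  ⨆ c : IsLocalRing.ResidueField R, resLaw R μ c

-- The probability `P(ξ ≡ r mod ann(M))` for `ξ` of law `μ`.
open Classical in
noncomputable def annCosetProb (R : Type) [CommRing R] [Fintype R]
    (M : Type) [AddCommGroup M] [Module R M] (μ : R → ℝ) (r : R) : ℝ :=
  ∑ x ∈ Finset.univ.filter (fun x => x - r ∈ Module.annihilator R M), μ x

-- The law of `mξ mod π` on the quotient group `M ⧸ π`, where `ξ` has law `μ`.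
open Classical in
noncomputable def quotLaw {R : Type} [CommRing R] [Fintype R]
    {M : Type} [AddCommGroup M] [Module R M]
    (μ : R → ℝ) (m : M) (π : AddSubgroup M) (c : M ⧸ π) : ℝ :=
  ∑ x ∈ Finset.univ.filter (fun x : R => (QuotientAddGroup.mk (x • m) : M ⧸ π) = c), μ x

/-- **Point-mass bounds for `mξ mod π`.** -/
theorem quotLaw_bounds
    (R : Type) [CommRing R] [Fintype R] [IsLocalRing R]
    (p : ℕ) (hp : CharP (IsLocalRing.ResidueField R) p)
    (M : Type) [AddCommGroup M] [Module R M] [Fintype M]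
    (μ : R → ℝ) (hμ0 : ∀ r, 0 ≤ μ r) (hμ1 : ∑ r, μ r = 1)
    (h0 : μ 0 ≠ 0)
    (π : AddSubgroup M) (m : M)
    (hout : ∃ x : R, μ x ≠ 0 ∧ x • m ∉ π)
    (α : ℝ)
    (hα : IsLeast {v : ℝ | v ≠ 0 ∧ ∃ r : R, v = annCosetProb R M μ r} α)
    (β : ℝ) (hβ : max (linfRes R μ) (1 / (p : ℝ)) = 1 - β) :
    (∃ c₁ c₂ : M ⧸ π, c₁ ≠ c₂ ∧ 0 < quotLaw μ m π c₁ ∧ 0 < quotLaw μ m π c₂) ∧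
    (∀ c : M ⧸ π, quotLaw μ m π c ≤ 1 - α) ∧
    ((∀ (r : R), ∀ x ∈ π, r • x ∈ π) →
      (∀ c : M ⧸ π, quotLaw μ m π c ≤ linfRes R μ) ∧ linfRes R μ ≤ 1 - β) := by
  classical
  obtain ⟨x₀, hx₀μ, hx₀π⟩ := hout
  have hμ00 : 0 < μ 0 := lt_of_le_of_ne (hμ0 0) (Ne.symm h0)
  have hμx₀ : 0 < μ x₀ := lt_of_le_of_ne (hμ0 x₀) (Ne.symm hx₀μ)
  -- quotLaw c ≥ μ x whenever x maps to c
  have hq_ge : ∀ (c : M ⧸ π) (x : R), (QuotientAddGroup.mk (x • m) : M ⧸ π) = c →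
      μ x ≤ quotLaw μ m π c := by
    intro c x hx
    unfold quotLaw
    apply Finset.single_le_sum (fun i _ => hμ0 i)
    simp [hx]
  have hq_nonneg : ∀ c : M ⧸ π, 0 ≤ quotLaw μ m π c := by
    intro c
    exact Finset.sum_nonneg fun i _ => hμ0 i
  have hc2ne : (QuotientAddGroup.mk (x₀ • m) : M ⧸ π) ≠ QuotientAddGroup.mk ((0 : R) • m) := by
    simp only [zero_smul]
    intro h
    exact hx₀π ((QuotientAddGroup.eq_zero_iff _).mp h)
  -- Part 1
  refine ⟨⟨QuotientAddGroup.mk ((0 : R) • m), QuotientAddGroup.mk (x₀ • m), hc2ne.symm,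
    lt_of_lt_of_le hμ00 (hq_ge _ 0 rfl), lt_of_lt_of_le hμx₀ (hq_ge _ x₀ rfl)⟩, ?_, ?_⟩
  · -- Part 2
    have key : ∀ (c : M ⧸ π) (r : R), (QuotientAddGroup.mk (r • m) : M ⧸ π) ≠ c →
        quotLaw μ m π c + annCosetProb R M μ r ≤ 1 := by
      intro c r hr
      set A := Finset.univ.filter (fun x : R => (QuotientAddGroup.mk (x • m) : M ⧸ π) = c) with hA
      set B := Finset.univ.filter (fun x : R => x - r ∈ Module.annihilator R M) with hB
      have hdisj : Disjoint A B := by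
        rw [Finset.disjoint_left]
        intro x hxA hxB
        rw [hA, Finset.mem_filter] at hxA
        rw [hB, Finset.mem_filter] at hxB
        have h1 : (x - r) • m = 0 := Module.mem_annihilator.mp hxB.2 m
        have h2 : x • m = r • m := by
          have := sub_smul x r m
          rw [h1] at this
          exact sub_eq_zero.mp this.symm
        exact hr (by rw [← h2, hxA.2])
      have h3 : quotLaw μ m π c + annCosetProb R M μ r = ∑ x ∈ A ∪ B, μ x := by
        rw [Finset.sum_union hdisj]; rfl
      rw [h3]
      calc ∑ x ∈ A ∪ B, μ x ≤ ∑ x, μ x :=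
            Finset.sum_le_sum_of_subset_of_nonneg (Finset.subset_univ _) (fun i _ _ => hμ0 i)
        _ = 1 := hμ1
    intro c
    have hann_ge : ∀ r : R, μ r ≤ annCosetProb R M μ r := by
      intro r
      unfold annCosetProb
      apply Finset.single_le_sum (fun i _ => hμ0 i)
      simp
    rcases eq_or_ne (QuotientAddGroup.mk ((0 : R) • m) : M ⧸ π) c with h | h
    · have hαle : α ≤ annCosetProb R M μ x₀ :=
        hα.2 ⟨ne_of_gt (lt_of_lt_of_le hμx₀ (hann_ge x₀)), x₀, rfl⟩
      have := key c x₀ (h ▸ hc2ne)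
      linarith
    · have hαle : α ≤ annCosetProb R M μ 0 :=
        hα.2 ⟨ne_of_gt (lt_of_lt_of_le hμ00 (hann_ge 0)), 0, rfl⟩
      have := key c 0 h
      linarith
  · -- Part 3
    intro hsub
    have hmπ : m ∉ π := fun hm => hx₀π (hsub x₀ m hm)
    haveI : Finite (IsLocalRing.ResidueField R) :=
      Finite.of_surjective (IsLocalRing.residue R) Ideal.Quotient.mk_surjective
    have hbdd : BddAbove (Set.range (resLaw R μ)) := Set.Finite.bddAbove (Set.finite_range _)
    have hres_nonneg : ∀ c, 0 ≤ resLaw R μ c :=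
      fun c => Finset.sum_nonneg fun i _ => hμ0 i
    have hle_sup : ∀ c, resLaw R μ c ≤ linfRes R μ := fun c => le_ciSup hbdd c
    constructor
    · intro c
      set A := Finset.univ.filter (fun x : R => (QuotientAddGroup.mk (x • m) : M ⧸ π) = c) with hA
      rcases Finset.eq_empty_or_nonempty A with hAe | ⟨y, hy⟩
      · have : quotLaw μ m π c = 0 := by
          unfold quotLaw; rw [← hA, hAe, Finset.sum_empty]
        rw [this]
        exact le_trans (hres_nonneg (IsLocalRing.residue R 0)) (hle_sup _)
      · rw [hA, Finset.mem_filter] at hy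
        have hsubset : A ⊆ Finset.univ.filter
            (fun x : R => IsLocalRing.residue R x = IsLocalRing.residue R y) := by
          intro x hx
          rw [hA, Finset.mem_filter] at hx
          rw [Finset.mem_filter]
          refine ⟨Finset.mem_univ _, ?_⟩
          have hxy : (x - y) • m ∈ π := by
            have : (QuotientAddGroup.mk (x • m) : M ⧸ π) = QuotientAddGroup.mk (y • m) := by
              rw [hx.2, hy.2]
            have h4 : -(x • m) + y • m ∈ π := QuotientAddGroup.eq.mp this
            have h5 : x • m - y • m ∈ π := by
              have := π.neg_mem h4
              simpa [neg_add, sub_eq_add_neg, add_comm] using this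
            rwa [← sub_smul] at h5
          have hnu : ¬ IsUnit (x - y) := by
            intro hu
            obtain ⟨u, hu'⟩ := hu
            have : ((u⁻¹ : Rˣ) : R) • ((x - y) • m) ∈ π := hsub _ _ hxy
            rw [smul_smul, ← hu', Units.inv_mul, one_smul] at this
            exact hmπ this
          have hmem : x - y ∈ IsLocalRing.maximalIdeal R := hnu
          show Ideal.Quotient.mk (IsLocalRing.maximalIdeal R) x =
            Ideal.Quotient.mk (IsLocalRing.maximalIdeal R) y
          exact (Ideal.Quotient.mk_eq_mk_iff_sub_mem x y).mpr hmem
        calc quotLaw μ m π c = ∑ x ∈ A, μ x := rfl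
          _ ≤ ∑ x ∈ Finset.univ.filter
              (fun x : R => IsLocalRing.residue R x = IsLocalRing.residue R y), μ x :=
            Finset.sum_le_sum_of_subset_of_nonneg hsubset (fun i _ _ => hμ0 i)
          _ = resLaw R μ (IsLocalRing.residue R y) := rfl
          _ ≤ linfRes R μ := hle_sup _
    · calc linfRes R μ ≤ max (linfRes R μ) (1 / (p : ℝ)) := le_max_left _ _
        _ = 1 - β := hβ

end
end

section
/- Let R be a finite commutative local ring with maximal ideal 𝔪 and residue field of characteristic p, and let M be a finite R-module. Let ξ₁, …, ξ_l be i.i.d. R-valued random variables of law μ, whose support contains 0 and 1 and is not contained in any proper subring of R. Fix ε > 0, let α be the smallest nonzero value of P(ξ ≡ r mod ann(M)) over r ∈ R, and define β by max(‖μ mod 𝔪‖_∞, 1/p) = 1 − β. Then there exists a positive integer T, depending only on ε, M and the distribution of (ξ mod ann(M)), with the following property: for every l-tuple (m₁, …, m_l) ∈ M^l such that at least one Fourier coefficient of Σ_i m_i ξ_i has absolute value strictly between ε/|M| and 1, there exists an additive subgroup π of M such that (i) ‖Σ_i m_i ξ_i‖_∞ ≤ (1−α)(1+ε)/|π|; (ii)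 if π is an R-submodule of M then ‖Σ_i m_i ξ_i‖_∞ ≤ (1−β)(1+ε)/|π|; and (iii) m_i ∈ π for all but at most T·|M| indices i. -/
/-!
The Fourier coefficient of `Σ mᵢ ξᵢ` at `χ` factors as `∏ᵢ E[χ(ξ mᵢ)]`, and a factor different
from `1` has modulus at most some `ρ < 1` depending only on `μ` and `M`. Choose `T` with
`ρ^T < ε μ(0)/|M|` and let `π` be generated by the `s • a` with `μ s ≠ 0` and `a` taken at least `T`
times by the `mᵢ`. Every character nontrivial on `π` then has a coefficient below `ε μ(0)/|M|`, so
the character of the hypothesis is trivial on `π`, and some `s₀ • m_{i₀}` with `μ s₀ ≠ 0` is not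
in `π`. Fourier inversion bounds each point mass by `P(Σ ∈ a + π)/|π|` plus the small coefficients,
and conditioning on all `ξᵢ` but `ξ_{i₀}` bounds `P(Σ ∈ a + π)` by the largest mass of a coset of
`{s | s • m_{i₀} ∈ π}`: at most `1 - α`, since such a coset misses the `ann(M)`-coset of `0` or of
`s₀`, and at most `‖μ mod 𝔪‖_∞` when `π` is a submodule, since that set is then a proper ideal.
Finally each value outside `π` is taken fewer than `T` times.
-/

noncomputable section

open Finset

lemma addChar_map_sum {A N ι : Type*} [AddCommMonoid A] [CommMonoid N] (χ : AddChar A N)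
    (s : Finset ι) (v : ι → A) : χ (∑ i ∈ s, v i) = ∏ i ∈ s, χ (v i) := by
  simpa [← ofAdd_sum] using map_prod χ.toMonoidHom (fun i => Multiplicative.ofAdd (v i)) s

lemma addChar_eq_one_of_mem_closure {M : Type*} [AddCommGroup M] {S : Set M}
    {χ : AddChar M ℂ} (h : ∀ x ∈ S, χ x = 1) {z : M} (hz : z ∈ AddSubgroup.closure S) :
    χ z = 1 := by
  induction hz using AddSubgroup.closure_induction with
  | mem x hx => exact h x hx
  | zero => exact χ.map_zero_eq_one
  | add x y _ _ hx hy => rw [χ.map_add_eq_mul, hx, hy, one_mul]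
  | neg x _ hx => rw [χ.map_neg_eq_inv, hx, inv_one]

lemma eq_sum_of_norm_sum_eq_one {ι : Type*} [Fintype ι] {w : ι → ℝ} {u : ι → ℂ}
    (hw0 : ∀ i, 0 ≤ w i) (hw1 : ∑ i, w i = 1) (hu : ∀ i, ‖u i‖ = 1)
    (h : ‖∑ i, (w i : ℂ) * u i‖ = 1) {i : ι} (hi : w i ≠ 0) :
    u i = ∑ j, (w j : ℂ) * u j := by
  set g := ∑ j, (w j : ℂ) * u j
  have hgg : starRingEnd ℂ g * g = 1 := by
    rw [mul_comm, Complex.mul_conj, Complex.normSq_eq_norm_sq, h]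
    norm_num
  have hnorm : ∀ j, ‖starRingEnd ℂ g * u j‖ = 1 := by simp [hu, h]
  -- `1 - ‖g‖² = ∑ w_j (1 - Re(ḡ u_j))` is a sum of nonnegative terms
  have hterm : ∀ j ∈ univ, 0 ≤ w j * (1 - (starRingEnd ℂ g * u j).re) := fun j _ =>
    mul_nonneg (hw0 j) (sub_nonneg.2 ((Complex.re_le_norm _).trans (hnorm j).le))
  have hsum : ∑ j, w j * (1 - (starRingEnd ℂ g * u j).re) = 0 := by
    have hsum_re : ∑ j, w j * (starRingEnd ℂ g * u j).re = (starRingEnd ℂ g * g).re := by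
      simp only [g, mul_sum, Complex.re_sum, mul_left_comm _ (w _ : ℂ), Complex.re_ofReal_mul]
    simp only [mul_sub, mul_one, sum_sub_distrib, hw1, hsum_re, hgg, Complex.one_re, sub_self]
  have hre : (starRingEnd ℂ g * u i).re = 1 := by
    rcases mul_eq_zero.1 ((sum_eq_zero_iff_of_nonneg hterm).1 hsum i (mem_univ i)) with h' | h'
    · exact absurd h' hi
    · linarith
  have hone : starRingEnd ℂ g * u i = 1 := by
    refine Complex.ext hre (Complex.abs_re_eq_norm.1 ?_)
    rw [hre, hnorm, abs_one]
  calc u i = g * (starRingEnd ℂ g * u i) := by rw [← mul_assoc, mul_comm g, hgg, one_mul]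
    _ = g := by rw [hone, mul_one]

open Classical in
lemma card_filter_apply_notMem_le {ι M : Type*} [Fintype ι] [Fintype M] (m : ι → M) (S : Set M)
    (T : ℕ) (hT : ∀ a ∉ S, #{i | m i = a} ≤ T) : #{i | m i ∉ S} ≤ T * Fintype.card M := by
  refine (card_le_mul_card_image (f := m) _ T fun a ha => ?_).trans
    (Nat.mul_le_mul_left _ (card_le_univ _))
  obtain ⟨i, hi, rfl⟩ := mem_image.1 ha
  exact (card_le_card (filter_subset_filter _ (subset_univ _))).trans (hT _ (mem_filter.1 hi).2)

section Fourier

variable {M : Type} [AddCommGroup M] [Fintype M]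

open Classical in
lemma sum_addChar_trivialOn_apply (π : AddSubgroup M) (y : M) :
    ∑ χ ∈ univ.filter (fun χ : AddChar M ℂ => ∀ z ∈ π, χ z = 1), χ y
      = if y ∈ π then (Nat.card (M ⧸ π) : ℂ) else 0 := by
  have : Fintype (M ⧸ π) := Fintype.ofFinite _
  have hquot := AddChar.sum_apply_eq_ite (QuotientAddGroup.mk y : M ⧸ π)
  simp only [QuotientAddGroup.eq_zero_iff, ← Fintype.card_eq_nat_card] at hquot ⊢
  rw [← hquot]
  symm
  refine Finset.sum_nbij (fun ψ => ψ.compAddMonoidHom (QuotientAddGroup.mk' π)) ?_ ?_ ?_ ?_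
  · intro ψ _
    simp only [mem_filter, mem_univ, true_and, AddChar.compAddMonoidHom_apply]
    intro z hz
    rw [show QuotientAddGroup.mk' π z = 0 from (QuotientAddGroup.eq_zero_iff z).2 hz,
      ψ.map_zero_eq_one]
  · exact (AddChar.compAddMonoidHom_injective_left _ (QuotientAddGroup.mk'_surjective π)).injOn
  · intro χ hχ
    simp only [coe_filter, mem_univ, true_and, Set.mem_ofPred_eq] at hχ
    refine ⟨AddChar.toAddMonoidHomEquiv.symm
      (QuotientAddGroup.lift π (AddChar.toAddMonoidHomEquiv χ) fun z hz => by simp [hχ z hz]),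
      by simp, ?_⟩
    ext x
    simp
  · intro ψ _
    rfl

lemma sum_fCoeff_mul_apply_neg (f : M → ℝ) (t : Finset (AddChar M ℂ)) (x₀ : M) :
    ∑ χ ∈ t, fCoeff f χ * χ (-x₀) = ∑ a, (f a : ℂ) * ∑ χ ∈ t, χ (a - x₀) := by
  simp only [fCoeff, sum_mul, mul_sum, mul_assoc, ← AddChar.map_add_eq_mul, sub_eq_add_neg]
  exact sum_comm

open Classical in
lemma le_sum_coset_div_card_add (f : M → ℝ) (π : AddSubgroup M) (x₀ : M) {B : ℝ} (hB0 : 0 ≤ B)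
    (hB : ∀ χ : AddChar M ℂ, (¬ ∀ z ∈ π, χ z = 1) → ‖fCoeff f χ‖ ≤ B) :
    f x₀ ≤ (∑ a ∈ univ.filter (fun a => a - x₀ ∈ π), f a) / Nat.card π + B := by
  set P : AddChar M ℂ → Prop := fun χ => ∀ z ∈ π, χ z = 1
  set S := ∑ a ∈ univ.filter (fun a => a - x₀ ∈ π), f a
  set Z := ∑ χ ∈ univ.filter (fun χ => ¬ P χ), fCoeff f χ * χ (-x₀)
  have hall : ∑ χ, fCoeff f χ * χ (-x₀) = Fintype.card M * f x₀ := by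
    rw [sum_fCoeff_mul_apply_neg]
    simp [AddChar.sum_apply_eq_ite, sub_eq_zero, mul_comm]
  have htriv : ∑ χ ∈ univ.filter P, fCoeff f χ * χ (-x₀) = Nat.card (M ⧸ π) * S := by
    rw [sum_fCoeff_mul_apply_neg]
    simp_rw [P, sum_addChar_trivialOn_apply, mul_ite, mul_zero, ← sum_filter, S]
    push_cast
    rw [mul_sum]
    exact sum_congr rfl fun _ _ => mul_comm _ _
  have hZ : ‖Z‖ ≤ Fintype.card M * B :=
    calc ‖Z‖ ≤ ∑ χ ∈ univ.filter (fun χ => ¬ P χ), B := norm_sum_le_of_le _ fun χ hχ => by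
          rw [norm_mul, AddChar.norm_apply, mul_one]
          exact hB χ (mem_filter.1 hχ).2
      _ ≤ ∑ _χ : AddChar M ℂ, B :=
          sum_le_sum_of_subset_of_nonneg (filter_subset _ _) fun _ _ _ => hB0
      _ = Fintype.card M * B := by simp [AddChar.card_eq]
  have hsplit : (Fintype.card M : ℂ) * f x₀ = Nat.card (M ⧸ π) * S + Z := by
    rw [← hall, ← htriv, sum_filter_add_sum_filter_not]
  have hre : Fintype.card M * f x₀ = Nat.card (M ⧸ π) * S + Z.re := by
    simpa using congrArg Complex.re hsplit
  have hcard : (Fintype.card M : ℝ) = Nat.card (M ⧸ π) * Nat.card π := by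
    rw [← Nat.card_eq_fintype_card]
    exact_mod_cast AddSubgroup.card_eq_card_quotient_mul_card_addSubgroup π
  have hq : (0 : ℝ) < Nat.card (M ⧸ π) := by exact_mod_cast Nat.card_pos
  have hp : (0 : ℝ) < Nat.card π := by exact_mod_cast Nat.card_pos
  rw [div_add' _ _ _ hp.ne', le_div_iff₀ hp]
  refine le_of_mul_le_mul_left ?_ hq
  rw [hcard] at hre hZ
  linarith [(Complex.re_le_norm Z).trans hZ]

end Fourier

section Frequent

variable {R : Type*} [Semiring R] {M : Type*} [AddCommGroup M] [Module R M]

open Classical in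
def frequentSpan {l : ℕ} (μ : R → ℝ) (m : Fin l → M) (T : ℕ) : AddSubgroup M :=
  AddSubgroup.closure {x | ∃ s a, μ s ≠ 0 ∧ T ≤ #{i | m i = a} ∧ s • a = x}

open Classical in
lemma card_filter_notMem_frequentSpan_le [Fintype M] {μ : R → ℝ} (h1 : μ 1 ≠ 0) {l : ℕ}
    (m : Fin l → M) (T : ℕ) : #{i | m i ∉ frequentSpan μ m T} ≤ T * Fintype.card M :=
  card_filter_apply_notMem_le m _ T fun a ha =>
    (not_le.1 fun h => ha (AddSubgroup.subset_closure ⟨1, a, h1, h, one_smul R a⟩)).le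

end Frequent

section TupleLaw

variable {R : Type} [CommRing R] [Fintype R] {M : Type} [AddCommGroup M] [Module R M]

def smulCoeff (μ : R → ℝ) (χ : AddChar M ℂ) (b : M) : ℂ := ∑ s, (μ s : ℂ) * χ (s • b)

variable {μ : R → ℝ}

lemma smulCoeff_eq_one_of_forall (hμ1 : ∑ r, μ r = 1) {χ : AddChar M ℂ} {b : M}
    (h : ∀ s, μ s ≠ 0 → χ (s • b) = 1) : smulCoeff μ χ b = 1 :=
  calc smulCoeff μ χ b = ∑ s, (μ s : ℂ) := sum_congr rfl fun s _ => by
        by_cases hs : μ s = 0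
        · simp [hs]
        · rw [h s hs, mul_one]
    _ = 1 := by exact_mod_cast hμ1

lemma le_annCosetProb (hμ0 : ∀ r, 0 ≤ μ r) (r : R) : μ r ≤ annCosetProb R M μ r := by
  unfold annCosetProb
  exact single_le_sum (fun x _ => hμ0 x) (by simp)

open Classical in
lemma sum_smul_add_mem_add_annCosetProb_le_one (hμ0 : ∀ r, 0 ≤ μ r) (hμ1 : ∑ r, μ r = 1)
    (π : AddSubgroup M) (b v : M) {r : R} (hr : r • b + v ∉ π) :
    ∑ s with s • b + v ∈ π, μ s + annCosetProb R M μ r ≤ 1 := by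
  unfold annCosetProb
  rw [← sum_union]
  · exact hμ1 ▸ sum_le_sum_of_subset_of_nonneg (subset_univ _) fun x _ _ => hμ0 x
  · refine disjoint_left.2 fun s hs hs' => hr ?_
    simp only [mem_filter, mem_univ, true_and] at hs hs'
    have hsr : s • b = r • b :=
      sub_eq_zero.1 (by rw [← sub_smul]; exact Module.mem_annihilator.1 hs' b)
    rwa [← hsr]

open Classical in
lemma sum_smul_add_mem_le_one_sub (hμ0 : ∀ r, 0 ≤ μ r) (hμ1 : ∑ r, μ r = 1) {α : ℝ}
    (hα : ∀ r, μ r ≠ 0 → α ≤ annCosetProb R M μ r) (h0 : μ 0 ≠ 0) {π : AddSubgroup M} {b : M}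
    {s₀ : R} (hs₀ : μ s₀ ≠ 0) (hb : s₀ • b ∉ π) (v : M) :
    ∑ s with s • b + v ∈ π, μ s ≤ 1 - α := by
  by_cases hv : v ∈ π
  · have := sum_smul_add_mem_add_annCosetProb_le_one hμ0 hμ1 π b v (r := s₀)
      (by rwa [π.add_mem_cancel_right hv])
    linarith [hα s₀ hs₀]
  · have := sum_smul_add_mem_add_annCosetProb_le_one hμ0 hμ1 π b v (r := 0)
      (by rwa [zero_smul, zero_add])
    linarith [hα 0 h0]

open Classical in
lemma sum_smul_add_mem_le_linfRes [IsLocalRing R] (hμ0 : ∀ r, 0 ≤ μ r) {π : AddSubgroup M}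
    (hπ : ∀ (r : R), ∀ x ∈ π, r • x ∈ π) {b : M} {s₀ : R} (hb : s₀ • b ∉ π) (v : M) :
    ∑ s with s • b + v ∈ π, μ s ≤ linfRes R μ := by
  have : Finite (IsLocalRing.ResidueField R) :=
    Finite.of_surjective _ IsLocalRing.residue_surjective
  have hle : ∀ c, resLaw R μ c ≤ linfRes R μ := le_ciSup (Set.finite_range _).bddAbove
  rcases (univ.filter fun s : R => s • b + v ∈ π).eq_empty_or_nonempty with hA | ⟨s₁, hs₁⟩
  · rw [hA, sum_empty]
    exact (sum_nonneg fun x _ => hμ0 x).trans (hle 0)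
  refine le_trans ?_ (hle (IsLocalRing.residue R s₁))
  unfold resLaw
  refine sum_le_sum_of_subset_of_nonneg (fun s hs => ?_) fun x _ _ => hμ0 x
  simp only [mem_filter, mem_univ, true_and] at hs hs₁ ⊢
  -- `{r | r • b ∈ π}` is a proper ideal, hence contained in the maximal ideal
  refine Ideal.Quotient.eq.2 ((IsLocalRing.mem_maximalIdeal _).2 fun hu => hb ?_)
  have hdiff : (s - s₁) • b ∈ π := by
    simpa [sub_smul] using π.sub_mem hs hs₁
  have hbπ : b ∈ π := by
    simpa [smul_smul, hu.unit.inv_mul] using hπ (↑hu.unit⁻¹ : R) _ hdiff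
  exact hπ s₀ b hbπ

variable [Fintype M]

lemma fCoeff_tupleLaw {l : ℕ} (m : Fin l → M) (χ : AddChar M ℂ) :
    fCoeff (tupleLaw μ m) χ = ∏ i, smulCoeff μ χ (m i) := by
  classical
  simp only [smulCoeff, Fintype.prod_sum, prod_mul_distrib, ← addChar_map_sum]
  rw [← sum_fiberwise univ (fun x : Fin l → R => ∑ i, x i • m i)]
  unfold fCoeff tupleLaw
  push_cast
  refine sum_congr rfl fun a _ => ?_
  rw [sum_mul]
  refine sum_congr (by congr) fun x hx => ?_
  rw [(mem_filter.1 hx).2]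

lemma norm_smulCoeff_le_one (hμ0 : ∀ r, 0 ≤ μ r) (hμ1 : ∑ r, μ r = 1) (χ : AddChar M ℂ)
    (b : M) : ‖smulCoeff μ χ b‖ ≤ 1 :=
  (norm_sum_le _ _).trans_eq <| by
    simp [AddChar.norm_apply, abs_of_nonneg (hμ0 _), hμ1]

lemma apply_smul_eq_one_of_norm_smulCoeff_eq_one (hμ0 : ∀ r, 0 ≤ μ r) (hμ1 : ∑ r, μ r = 1)
    (h0 : μ 0 ≠ 0) {χ : AddChar M ℂ} {b : M} (hnorm : ‖smulCoeff μ χ b‖ = 1) {s : R}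
    (hs : μ s ≠ 0) : χ (s • b) = 1 := by
  have key := fun {s} => eq_sum_of_norm_sum_eq_one hμ0 hμ1
    (fun s => AddChar.norm_apply χ (s • b)) hnorm (i := s)
  rw [key hs, ← key h0, zero_smul, χ.map_zero_eq_one]

lemma norm_smulCoeff_lt_one (hμ0 : ∀ r, 0 ≤ μ r) (hμ1 : ∑ r, μ r = 1) (h0 : μ 0 ≠ 0)
    {χ : AddChar M ℂ} {b : M} (h : smulCoeff μ χ b ≠ 1) : ‖smulCoeff μ χ b‖ < 1 :=
  (norm_smulCoeff_le_one hμ0 hμ1 χ b).lt_of_ne fun hnorm => h <|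
    smulCoeff_eq_one_of_forall hμ1 fun _ =>
      apply_smul_eq_one_of_norm_smulCoeff_eq_one hμ0 hμ1 h0 hnorm

lemma exists_norm_smulCoeff_le_of_ne_one (hμ0 : ∀ r, 0 ≤ μ r) (hμ1 : ∑ r, μ r = 1)
    (h0 : μ 0 ≠ 0) :
    ∃ ρ < 1, 0 ≤ ρ ∧
      ∀ (χ : AddChar M ℂ) (b : M), smulCoeff μ χ b ≠ 1 → ‖smulCoeff μ χ b‖ ≤ ρ := by
  classical
  let f : AddChar M ℂ × M → ℝ := fun p =>
    if smulCoeff μ p.1 p.2 = 1 then 0 else ‖smulCoeff μ p.1 p.2‖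
  obtain ⟨p, hp⟩ := Finite.exists_max f
  refine ⟨f p, ?_, ?_, fun χ b hne => by simpa [f, hne] using hp (χ, b)⟩
  · unfold f
    split_ifs with h
    exacts [zero_lt_one, norm_smulCoeff_lt_one hμ0 hμ1 h0 h]
  · unfold f
    split_ifs <;> positivity

open Classical in
lemma norm_fCoeff_tupleLaw_le_pow (hμ0 : ∀ r, 0 ≤ μ r) (hμ1 : ∑ r, μ r = 1) {l : ℕ}
    (m : Fin l → M) (χ : AddChar M ℂ) (a : M) :
    ‖fCoeff (tupleLaw μ m) χ‖ ≤ ‖smulCoeff μ χ a‖ ^ #{i | m i = a} := by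
  rw [fCoeff_tupleLaw, norm_prod]
  calc ∏ i, ‖smulCoeff μ χ (m i)‖ ≤ ∏ i with m i = a, ‖smulCoeff μ χ (m i)‖ :=
        prod_le_prod_of_subset_of_le_one (filter_subset _ _) (fun _ _ => norm_nonneg _)
          fun i _ _ => norm_smulCoeff_le_one hμ0 hμ1 _ _
    _ = _ := prod_eq_pow_card fun i hi => by rw [(mem_filter.1 hi).2]

lemma norm_fCoeff_tupleLaw_le_of_not_trivialOn (hμ0 : ∀ r, 0 ≤ μ r) (hμ1 : ∑ r, μ r = 1)
    (h0 : μ 0 ≠ 0) {ρ : ℝ} (hρ0 : 0 ≤ ρ) (hρ1 : ρ ≤ 1)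
    (hgap : ∀ (χ : AddChar M ℂ) (b : M), smulCoeff μ χ b ≠ 1 → ‖smulCoeff μ χ b‖ ≤ ρ)
    {l : ℕ} {m : Fin l → M} {T : ℕ} {χ : AddChar M ℂ}
    (hχ : ¬ ∀ z ∈ frequentSpan μ m T, χ z = 1) : ‖fCoeff (tupleLaw μ m) χ‖ ≤ ρ ^ T := by
  have hgen : ¬ ∀ x ∈ _, χ x = 1 := fun h => hχ fun z hz => addChar_eq_one_of_mem_closure h hz
  push Not at hgen
  obtain ⟨_, ⟨s, a, hs, ha, rfl⟩, hχsa⟩ := hgen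
  have hne : smulCoeff μ χ a ≠ 1 := fun h => hχsa <|
    apply_smul_eq_one_of_norm_smulCoeff_eq_one hμ0 hμ1 h0 (by rw [h, norm_one]) hs
  calc ‖fCoeff (tupleLaw μ m) χ‖ ≤ ‖smulCoeff μ χ a‖ ^ _ :=
        norm_fCoeff_tupleLaw_le_pow hμ0 hμ1 m χ a
    _ ≤ ρ ^ _ := pow_le_pow_left₀ (norm_nonneg _) (hgap χ a hne) _
    _ ≤ ρ ^ T := pow_le_pow_of_le_one hρ0 hρ1 ha

lemma exists_apply_smul_ne_one_of_fCoeff_ne_one (hμ1 : ∑ r, μ r = 1) {l : ℕ} {m : Fin l → M}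
    {χ : AddChar M ℂ} (h : fCoeff (tupleLaw μ m) χ ≠ 1) : ∃ i s, μ s ≠ 0 ∧ χ (s • m i) ≠ 1 := by
  by_contra! hall
  exact h (by rw [fCoeff_tupleLaw, prod_eq_one fun i _ => smulCoeff_eq_one_of_forall hμ1 (hall i)])

lemma sum_filter_tupleLaw_le (hμ0 : ∀ r, 0 ≤ μ r) (hμ1 : ∑ r, μ r = 1) {l : ℕ} (m : Fin l → M)
    (P : M → Prop) [DecidablePred P] (i₀ : Fin l) {w : ℝ}
    (hw : ∀ v : M, ∑ s with P (s • m i₀ + v), μ s ≤ w) :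
    ∑ a with P a, tupleLaw μ m a ≤ w := by
  classical
  obtain ⟨n, rfl⟩ : ∃ n, l = n + 1 := Nat.exists_eq_succ_of_ne_zero i₀.pos.ne'
  have hfib : ∑ a with P a, tupleLaw μ m a =
      ∑ x : Fin (n + 1) → R with P (∑ i, x i • m i), ∏ i, μ (x i) := by
    unfold tupleLaw
    convert sum_fiberwise_eq_sum_filter univ {a | P a} (fun x => ∑ i, x i • m i)
      (fun x : Fin (n + 1) → R => ∏ i, μ (x i)) using 2
    simp
  rw [hfib, sum_filter, ← (Fin.insertNthEquiv (fun _ => R) i₀).sum_comp, Fintype.sum_prod_type,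
    sum_comm]
  calc _ = ∑ y : Fin n → R, (∏ j, μ (y j)) *
        ∑ s with P (s • m i₀ + ∑ j, y j • m (i₀.succAbove j)), μ s := by
        refine sum_congr rfl fun y _ => ?_
        rw [sum_filter, mul_sum]
        refine sum_congr rfl fun s _ => ?_
        simp only [Fin.insertNthEquiv_apply, Fin.sum_univ_succAbove _ i₀,
          Fin.prod_univ_succAbove _ i₀, Fin.insertNth_apply_same, Fin.insertNth_apply_succAbove]
        split_ifs <;> ring
    _ ≤ ∑ y : Fin n → R, (∏ j, μ (y j)) * w :=
        sum_le_sum fun y _ => mul_le_mul_of_nonneg_left (hw _) (prod_nonneg fun j _ => hμ0 _)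
    _ = w := by rw [← sum_mul, ← Fintype.sum_pow, hμ1, one_pow, one_mul]

open Classical in
lemma tupleLaw_le_of_sum_smul_add_mem_le (hμ0 : ∀ r, 0 ≤ μ r) (hμ1 : ∑ r, μ r = 1) {ε : ℝ}
    (hε : 0 < ε) {l : ℕ} (m : Fin l → M) (π : AddSubgroup M)
    (hB : ∀ χ : AddChar M ℂ, (¬ ∀ z ∈ π, χ z = 1) →
      ‖fCoeff (tupleLaw μ m) χ‖ ≤ ε * μ 0 / Fintype.card M)
    (i₀ : Fin l) {w : ℝ} (hw : ∀ v, ∑ s with s • m i₀ + v ∈ π, μ s ≤ w) (a : M) :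
    tupleLaw μ m a ≤ w * (1 + ε) / Nat.card π := by
  have hcoset : ∑ x with x - a ∈ π, tupleLaw μ m x ≤ w :=
    sum_filter_tupleLaw_le hμ0 hμ1 m _ i₀ fun v => by simpa only [add_sub_assoc] using hw (v - a)
  have hμw : μ 0 ≤ w :=
    (single_le_sum (fun s _ => hμ0 s) (mem_filter.2 ⟨mem_univ (0 : R), by simp⟩)).trans (hw 0)
  have hπ : (0 : ℝ) < Nat.card π := by exact_mod_cast Nat.card_pos
  have hπM : (Nat.card π : ℝ) ≤ Fintype.card M := by
    exact_mod_cast Nat.card_eq_fintype_card (α := M) ▸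
      Nat.card_le_card_of_injective _ Subtype.val_injective
  have hw0 : 0 ≤ w := (hμ0 0).trans hμw
  calc tupleLaw μ m a
      ≤ (∑ x with x - a ∈ π, tupleLaw μ m x) / Nat.card π + ε * μ 0 / Fintype.card M :=
        le_sum_coset_div_card_add _ π a (by have := hμ0 0; positivity) hB
    _ ≤ w / Nat.card π + ε * w / Nat.card π := by gcongr
    _ = w * (1 + ε) / Nat.card π := by ring

end TupleLaw

theorem c3_structure_general
    (R : Type) [CommRing R] [Fintype R] [IsLocalRing R]
    (p : ℕ)
    (M : Type) [AddCommGroup M] [Module R M] [Fintype M]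
    (ε : ℝ) (hε : 0 < ε)
    (μ : R → ℝ) (hμ0 : ∀ r, 0 ≤ μ r) (hμ1 : ∑ r, μ r = 1)
    (h0 : μ 0 ≠ 0) (h1 : μ 1 ≠ 0)
    (α : ℝ)
    (hα : IsLeast {v : ℝ | v ≠ 0 ∧ ∃ r : R, v = annCosetProb R M μ r} α)
    (β : ℝ) (hβ : max (linfRes R μ) (1 / (p : ℝ)) = 1 - β) :
    ∃ T : ℕ, 0 < T ∧
      ∀ (l : ℕ) (m : Fin l → M),
        (∃ χ : AddChar M ℂ,
            ε / (Fintype.card M : ℝ) < ‖fCoeff (tupleLaw μ m) χ‖ ∧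
            ‖fCoeff (tupleLaw μ m) χ‖ < 1) →
        ∃ π : AddSubgroup M,
          (∀ a : M, tupleLaw μ m a ≤ (1 - α) * (1 + ε) / (Nat.card π : ℝ)) ∧
          ((∀ (r : R), ∀ x ∈ π, r • x ∈ π) →
            ∀ a : M, tupleLaw μ m a ≤ (1 - β) * (1 + ε) / (Nat.card π : ℝ)) ∧
          (open Classical in
            (Finset.univ.filter (fun i : Fin l => m i ∉ π)).card ≤ T * Fintype.card M) := by
  classical
  obtain ⟨ρ, hρ1, hρ0, hgap⟩ := exists_norm_smulCoeff_le_of_ne_one (M := M) hμ0 hμ1 h0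
  have hμ0pos : 0 < μ 0 := (hμ0 0).lt_of_ne' h0
  have hμ0le : μ 0 ≤ 1 := hμ1 ▸ single_le_sum (fun r _ => hμ0 r) (mem_univ 0)
  obtain ⟨N, hN⟩ := exists_pow_lt_of_lt_one (by positivity : 0 < ε * μ 0 / Fintype.card M) hρ1
  refine ⟨N + 1, N.succ_pos, fun l m ⟨χ₀, hlow, hhigh⟩ => ?_⟩
  set π := frequentSpan μ m (N + 1)
  have hB : ∀ χ : AddChar M ℂ, (¬ ∀ z ∈ π, χ z = 1) →
      ‖fCoeff (tupleLaw μ m) χ‖ ≤ ε * μ 0 / Fintype.card M := fun χ hχ =>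
    (norm_fCoeff_tupleLaw_le_of_not_trivialOn hμ0 hμ1 h0 hρ0 hρ1.le hgap hχ).trans
      ((pow_le_pow_of_le_one hρ0 hρ1.le N.le_succ).trans hN.le)
  have hχ₀ : ∀ z ∈ π, χ₀ z = 1 := by
    by_contra h
    have : ε * μ 0 / Fintype.card M ≤ ε / Fintype.card M := by
      gcongr
      exact mul_le_of_le_one_right hε.le hμ0le
    linarith [hB χ₀ h]
  obtain ⟨i₀, s₀, hs₀, hχ₀s₀⟩ :=
    exists_apply_smul_ne_one_of_fCoeff_ne_one hμ1 fun h => hhigh.ne (by rw [h, norm_one])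
  have hs₀π : s₀ • m i₀ ∉ π := fun h => hχ₀s₀ (hχ₀ _ h)
  have hα' : ∀ r, μ r ≠ 0 → α ≤ annCosetProb R M μ r := fun r hr =>
    hα.2 ⟨(((hμ0 r).lt_of_ne' hr).trans_le (le_annCosetProb hμ0 r)).ne', r, rfl⟩
  exact ⟨π, tupleLaw_le_of_sum_smul_add_mem_le hμ0 hμ1 hε m π hB i₀
      (sum_smul_add_mem_le_one_sub hμ0 hμ1 hα' h0 hs₀ hs₀π),
    fun hπ => tupleLaw_le_of_sum_smul_add_mem_le hμ0 hμ1 hε m π hB i₀ fun v =>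
      (sum_smul_add_mem_le_linfRes hμ0 hπ hs₀π v).trans (hβ ▸ le_max_left _ _),
    card_filter_notMem_frequentSpan_le h1 m (N + 1)⟩

/-- **Structure theorem for `C₃` tuples.** -/
theorem c3_structure
    (R : Type) [CommRing R] [Fintype R] [IsLocalRing R]
    (p : ℕ) (hp : CharP (IsLocalRing.ResidueField R) p)
    (M : Type) [AddCommGroup M] [Module R M] [Fintype M]
    (ε : ℝ) (hε : 0 < ε)
    (μ : R → ℝ) (hμ0 : ∀ r, 0 ≤ μ r) (hμ1 : ∑ r, μ r = 1)
    (h0 : μ 0 ≠ 0) (h1 : μ 1 ≠ 0)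
    (hSubring : ∀ S : Subring R, S ≠ ⊤ → ¬ (∀ x : R, μ x ≠ 0 → x ∈ S))
    (α : ℝ)
    (hα : IsLeast {v : ℝ | v ≠ 0 ∧ ∃ r : R, v = annCosetProb R M μ r} α)
    (β : ℝ) (hβ : max (linfRes R μ) (1 / (p : ℝ)) = 1 - β) :
    ∃ T : ℕ, 0 < T ∧
      ∀ (l : ℕ) (m : Fin l → M),
        (∃ χ : AddChar M ℂ,
            ε / (Fintype.card M : ℝ) < ‖fCoeff (tupleLaw μ m) χ‖ ∧
            ‖fCoeff (tupleLaw μ m) χ‖ < 1) →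
        ∃ π : AddSubgroup M,
          (∀ a : M, tupleLaw μ m a ≤ (1 - α) * (1 + ε) / (Nat.card π : ℝ)) ∧
          ((∀ (r : R), ∀ x ∈ π, r • x ∈ π) →
            ∀ a : M, tupleLaw μ m a ≤ (1 - β) * (1 + ε) / (Nat.card π : ℝ)) ∧
          (open Classical in
            (Finset.univ.filter (fun i : Fin l => m i ∉ π)).card ≤ T * Fintype.card M) :=
  c3_structure_general R p M ε hε μ hμ0 hμ1 h0 h1 α hα β hβ

end
end

section
/- Let R be a finite commutative ring and M a finite R-module. For submodules N₁ ≠ N₂ of M, the subspaces V(M,N₁) and V(M,N₂) of 𝒫(M) are orthogonal with respect to the Euclidean inner product on 𝒫(M). -/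
/-!
Orthogonality of the components `V(M,N)` of the decomposition of the space of
signed measures on a finite module `M` over a finite commutative ring.
-/

noncomputable section

-- `proj_N ν`: the average of `ν` over `N`-cosets.
open Classical in
noncomputable def projN {R M : Type} [CommRing R] [AddCommGroup M] [Module R M]
    [Finite M] (N : Submodule R M) (ν : M → ℝ) : M → ℝ :=
  letI : Fintype M := Fintype.ofFinite _
  fun x => (∑ y ∈ Finset.univ.filter (fun y => y ∈ N), ν (x + y)) / (Nat.card N : ℝ)

/-- `V(M,N)`: signed measures constant on `N`-cosets whose average over
`N'`-cosets vanishes for every submodule `N'` strictly containing `N`. -/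
def Vspace {R M : Type} [CommRing R] [AddCommGroup M] [Module R M] [Finite M]
    (N : Submodule R M) : Set (M → ℝ) :=
  {ν | (∀ x : M, ∀ y ∈ N, ν (x + y) = ν x) ∧
       ∀ N' : Submodule R M, N < N' → projN N' ν = 0}

open Classical Finset

variable {R M : Type} [CommRing R] [AddCommGroup M] [Module R M] [Fintype M]

private lemma projN_apply (N : Submodule R M) (ν : M → ℝ) (x : M) :
    projN N ν x = (∑ y ∈ Finset.univ.filter (fun y => y ∈ N), ν (x + y)) / (Nat.card N : ℝ) := by
  have h : Fintype.ofFinite M = ‹Fintype M› := Subsingleton.elim _ _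
  unfold projN
  rw [h]

private lemma sum_shift (N : Submodule R M) (f : M → ℝ) {a : M} (ha : a ∈ N) :
    ∑ y ∈ univ.filter (fun y => y ∈ N), f (y + a) = ∑ y ∈ univ.filter (fun y => y ∈ N), f y := by
  apply Finset.sum_nbij' (fun y => y + a) (fun y => y - a) <;> intro b hb <;>
    simp_all [Submodule.add_mem, Submodule.sub_mem, sub_add_cancel]

private lemma projN_shift (N : Submodule R M) (ν : M → ℝ) (x : M) {a : M} (ha : a ∈ N) :
    projN N ν (x + a) = projN N ν x := by
  rw [projN_apply, projN_apply]
  congr 1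
  rw [← sum_shift N (fun y => ν (x + y)) ha]
  exact Finset.sum_congr rfl fun y _ => by congr 1; abel

private lemma mycard_filter (N : Submodule R M) :
    ((univ.filter (fun y => y ∈ N)).card : ℝ) = (Nat.card N : ℝ) := by
  norm_cast
  rw [Nat.card_eq_fintype_card]
  exact (Fintype.card_subtype _).symm

private lemma mycard_pos (N : Submodule R M) : (0 : ℝ) < (Nat.card N : ℝ) := by
  have : 0 < Nat.card N := Nat.card_pos
  exact_mod_cast this

private lemma projN_of_const (N : Submodule R M) (ν : M → ℝ)
    (h : ∀ x : M, ∀ a ∈ N, ν (x + a) = ν x) : projN N ν = ν := by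
  funext x
  rw [projN_apply]
  rw [Finset.sum_congr rfl (fun a ha => h x a (by simpa using ha))]
  rw [Finset.sum_const, nsmul_eq_mul]
  rw [mycard_filter, mul_comm, mul_div_assoc, div_self (mycard_pos N).ne', mul_one]

private lemma projN_zero (N : Submodule R M) : projN N (0 : M → ℝ) = 0 := by
  funext x
  rw [projN_apply]
  simp

private lemma projN_comm (A B : Submodule R M) (ν : M → ℝ) :
    projN A (projN B ν) = projN B (projN A ν) := by
  funext x
  simp only [projN_apply]
  rw [← Finset.sum_div, ← Finset.sum_div, Finset.sum_comm]
  rw [div_div, div_div, mul_comm]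
  congr 2
  funext y
  apply Finset.sum_congr rfl; intro z _
  congr 1; abel

private lemma sum_mul_projN (N : Submodule R M) (ν₁ ν₂ : M → ℝ)
    (h₂ : ∀ x : M, ∀ a ∈ N, ν₂ (x + a) = ν₂ x) :
    ∑ x : M, ν₁ x * ν₂ x = ∑ x : M, projN N ν₁ x * ν₂ x := by
  have key : ∀ y ∈ univ.filter (fun y => y ∈ N),
      (∑ x : M, ν₁ (x + y) * ν₂ x) = ∑ x : M, ν₁ x * ν₂ x := by
    intro y hy
    have hyN : y ∈ N := by simpa using hy
    calc ∑ x : M, ν₁ (x + y) * ν₂ x = ∑ x : M, ν₁ (x + y) * ν₂ (x + y) :=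
          Finset.sum_congr rfl fun x _ => by rw [h₂ x y hyN]
      _ = ∑ x : M, ν₁ x * ν₂ x :=
          Fintype.sum_equiv (Equiv.addRight y) _ _ (fun x => rfl)
  symm
  calc ∑ x : M, projN N ν₁ x * ν₂ x
      = (∑ x : M, ∑ y ∈ univ.filter (fun y => y ∈ N), ν₁ (x + y) * ν₂ x)
          / (Nat.card N : ℝ) := by
        simp only [projN_apply, div_mul_eq_mul_div, Finset.sum_mul]
        rw [← Finset.sum_div]
    _ = (∑ y ∈ univ.filter (fun y => y ∈ N), ∑ x : M, ν₁ (x + y) * ν₂ x)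
          / (Nat.card N : ℝ) := by rw [Finset.sum_comm]
    _ = (∑ _y ∈ univ.filter (fun y => y ∈ N), ∑ x : M, ν₁ x * ν₂ x)
          / (Nat.card N : ℝ) := by rw [Finset.sum_congr rfl key]
    _ = ∑ x : M, ν₁ x * ν₂ x := by
        rw [Finset.sum_const, nsmul_eq_mul, mycard_filter, mul_comm, mul_div_assoc,
          div_self (mycard_pos N).ne', mul_one]

private lemma proj_const_sup (N₁ N₂ : Submodule R M) (ν₁ : M → ℝ)
    (h₁ : ∀ x : M, ∀ a ∈ N₁, ν₁ (x + a) = ν₁ x) :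
    ∀ x : M, ∀ z ∈ N₁ ⊔ N₂, projN N₂ ν₁ (x + z) = projN N₂ ν₁ x := by
  intro x z hz
  obtain ⟨a, ha, b, hb, rfl⟩ := Submodule.mem_sup.mp hz
  rw [show x + (a + b) = (x + a) + b by abel, projN_shift N₂ ν₁ _ hb]
  rw [projN_apply, projN_apply]
  congr 1
  apply Finset.sum_congr rfl; intro y _
  rw [show x + a + y = (x + y) + a by abel, h₁ _ a ha]

private lemma main_aux (N₁ N₂ : Submodule R M) (h : N₁ < N₁ ⊔ N₂) (ν₁ ν₂ : M → ℝ)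
    (hν₁ : ν₁ ∈ Vspace N₁) (hν₂ : ν₂ ∈ Vspace N₂) : ∑ x : M, ν₁ x * ν₂ x = 0 := by
  have hz : projN (N₁ ⊔ N₂) ν₁ = 0 := hν₁.2 _ h
  have hproj : projN N₂ ν₁ = 0 := by
    calc projN N₂ ν₁
        = projN (N₁ ⊔ N₂) (projN N₂ ν₁) :=
          (projN_of_const _ _ (proj_const_sup N₁ N₂ ν₁ hν₁.1)).symm
      _ = projN N₂ (projN (N₁ ⊔ N₂) ν₁) := projN_comm _ _ _
      _ = 0 := by rw [hz, projN_zero]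
  rw [sum_mul_projN N₂ ν₁ ν₂ hν₂.1, hproj]
  simp

/-- **Orthogonality of the subspaces `V(M,N₁)` and `V(M,N₂)` for `N₁ ≠ N₂`.** -/
theorem Vspace_orthogonal
    (R : Type) [CommRing R] [Fintype R]
    (M : Type) [AddCommGroup M] [Module R M] [Fintype M]
    (N₁ N₂ : Submodule R M) (hN : N₁ ≠ N₂)
    (ν₁ : M → ℝ) (hν₁ : ν₁ ∈ Vspace N₁)
    (ν₂ : M → ℝ) (hν₂ : ν₂ ∈ Vspace N₂) :
    ∑ x : M, ν₁ x * ν₂ x = 0 := by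
  by_cases h : N₁ < N₁ ⊔ N₂
  · exact main_aux N₁ N₂ h ν₁ ν₂ hν₁ hν₂
  · have hle : N₂ ≤ N₁ := by
      by_contra hc
      exact h (lt_of_le_of_ne le_sup_left fun he => hc (he ▸ le_sup_right))
    have h2 : N₂ < N₂ ⊔ N₁ := by
      rw [sup_eq_right.mpr hle]
      exact lt_of_le_of_ne hle (Ne.symm hN)
    have := main_aux N₂ N₁ h2 ν₂ ν₁ hν₂ hν₁
    rw [← this]
    exact Finset.sum_congr rfl fun x _ => mul_comm _ _

end
end

section
/- Let R be a finite commutative ring and M a finite R-module. Then 𝒫(M) is the (internal, orthogonal) direct sum of the subspaces V(M,N) as N ranges over all submodules of M: 𝒫(M) = ⊕_{N ⊆ M} V(M,N). -/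
/-!
The space of signed measures on a finite module `M` over a finite commutative
ring is the internal orthogonal direct sum of the subspaces `V(M,N)`, as `N`
ranges over the submodules of `M`.
-/

noncomputable section

noncomputable instance submoduleFintype {R M : Type} [CommRing R]
    [AddCommGroup M] [Module R M] [Fintype M] : Fintype (Submodule R M) :=
  haveI : Finite (Submodule R M) :=
    Finite.of_injective (fun N => (N : Set M)) SetLike.coe_injective
  Fintype.ofFinite _

set_option linter.unusedSectionVars false

open Classical

namespace VspaceAux

variable {R M : Type} [CommRing R] [AddCommGroup M] [Module R M] [Finite M]

theorem sum_shift (N : Submodule R M) (f : M → ℝ) (z : M) (hz : z ∈ N) :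
    letI : Fintype M := Fintype.ofFinite _
    ∑ y ∈ Finset.univ.filter (fun y => y ∈ N), f (y + z)
      = ∑ y ∈ Finset.univ.filter (fun y => y ∈ N), f y := by
  letI : Fintype M := Fintype.ofFinite M
  refine Finset.sum_bij' (fun y _ => y + z) (fun y _ => y - z) ?_ ?_ ?_ ?_ ?_
  · intro a ha; simp only [Finset.mem_filter, Finset.mem_univ, true_and] at ha ⊢
    exact N.add_mem ha hz
  · intro a ha; simp only [Finset.mem_filter, Finset.mem_univ, true_and] at ha ⊢
    exact N.sub_mem ha hz
  · intro a _; exact add_sub_cancel_right a z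
  · intro a _; exact sub_add_cancel a z
  · intro a _; rfl

theorem natCard_pos (N : Submodule R M) : (0:ℝ) < (Nat.card N : ℝ) := by
  have : 0 < Nat.card N := Nat.card_pos
  exact_mod_cast this

theorem projN_apply (N : Submodule R M) (ν : M → ℝ) (x : M) :
    letI : Fintype M := Fintype.ofFinite _
    projN N ν x = (∑ y ∈ Finset.univ.filter (fun y => y ∈ N), ν (x + y)) / (Nat.card N : ℝ) :=
  rfl

theorem card_filter_mem (N : Submodule R M) :
    letI : Fintype M := Fintype.ofFinite _
    (Finset.univ.filter (fun y => y ∈ N)).card = (Nat.card N : ℕ) := by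
  letI : Fintype M := Fintype.ofFinite M
  rw [Nat.card_eq_fintype_card]
  rw [Fintype.card_subtype]

theorem projN_shift (N : Submodule R M) (ν : M → ℝ) (x y : M) (hy : y ∈ N) :
    projN N ν (x + y) = projN N ν x := by
  letI : Fintype M := Fintype.ofFinite M
  rw [projN_apply, projN_apply]
  congr 1
  have h := sum_shift N (fun w => ν (x + w)) y hy
  rw [← h]
  apply Finset.sum_congr rfl
  intro z _
  congr 1
  abel

theorem projN_of_const (N : Submodule R M) (ν : M → ℝ)
    (hc : ∀ x : M, ∀ y ∈ N, ν (x + y) = ν x) : projN N ν = ν := by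
  letI : Fintype M := Fintype.ofFinite M
  funext x
  rw [projN_apply]
  rw [Finset.sum_congr rfl (fun y hy => hc x y (by simpa using hy))]
  rw [Finset.sum_const, card_filter_mem, nsmul_eq_mul]
  rw [mul_div_cancel_left₀ _ (natCard_pos N).ne']

theorem projN_sub (N : Submodule R M) (f g : M → ℝ) :
    projN N (f - g) = projN N f - projN N g := by
  letI : Fintype M := Fintype.ofFinite M
  funext x
  simp only [Pi.sub_apply, projN_apply, Finset.sum_sub_distrib, sub_div]

theorem projN_finsum {ι : Type*} (N : Submodule R M) (s : Finset ι) (f : ι → M → ℝ) :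
    projN N (∑ i ∈ s, f i) = ∑ i ∈ s, projN N (f i) := by
  letI : Fintype M := Fintype.ofFinite M
  funext x
  simp only [Finset.sum_apply, projN_apply, ← Finset.sum_div]
  rw [Finset.sum_comm]

theorem projN_projN_of_le {N P : Submodule R M} (h : N ≤ P) (ν : M → ℝ) :
    projN P (projN N ν) = projN P ν := by
  letI : Fintype M := Fintype.ofFinite M
  funext x
  rw [projN_apply, projN_apply]
  congr 1
  calc ∑ z ∈ Finset.univ.filter (fun y => y ∈ P), projN N ν (x + z)
      = ∑ z ∈ Finset.univ.filter (fun y => y ∈ P),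
          (∑ y ∈ Finset.univ.filter (fun y => y ∈ N), ν (x + z + y)) / (Nat.card N : ℝ) := by
        refine Finset.sum_congr rfl fun z _ => ?_; rw [projN_apply]
    _ = (∑ y ∈ Finset.univ.filter (fun y => y ∈ N),
          ∑ z ∈ Finset.univ.filter (fun y => y ∈ P), ν (x + z + y)) / (Nat.card N : ℝ) := by
        rw [← Finset.sum_div, Finset.sum_comm]
    _ = (∑ y ∈ Finset.univ.filter (fun y => y ∈ N),
          ∑ z ∈ Finset.univ.filter (fun y => y ∈ P), ν (x + z)) / (Nat.card N : ℝ) := by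
        congr 1
        refine Finset.sum_congr rfl fun y hy => ?_
        have hyP : y ∈ P := h (by simpa using hy)
        have hs := sum_shift P (fun w => ν (x + w)) y hyP
        rw [← hs]
        refine Finset.sum_congr rfl fun z _ => ?_
        congr 1; abel
    _ = ∑ z ∈ Finset.univ.filter (fun y => y ∈ P), ν (x + z) := by
        rw [Finset.sum_const, card_filter_mem, nsmul_eq_mul,
          mul_div_cancel_left₀ _ (natCard_pos N).ne']

theorem projN_shift_of_const {N₂ : Submodule R M} (N₁ : Submodule R M) {ν : M → ℝ}
    (hc : ∀ x : M, ∀ y ∈ N₂, ν (x + y) = ν x) :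
    ∀ x : M, ∀ y ∈ N₂, projN N₁ ν (x + y) = projN N₁ ν x := by
  letI : Fintype M := Fintype.ofFinite M
  intro x y hy
  rw [projN_apply, projN_apply]
  congr 1
  refine Finset.sum_congr rfl fun z _ => ?_
  rw [show x + y + z = (x + z) + y by abel, hc (x + z) y hy]

theorem const_sup {N₁ N₂ : Submodule R M} {ν : M → ℝ}
    (h1 : ∀ x : M, ∀ y ∈ N₁, ν (x + y) = ν x)
    (h2 : ∀ x : M, ∀ y ∈ N₂, ν (x + y) = ν x) :
    ∀ x : M, ∀ y ∈ N₁ ⊔ N₂, ν (x + y) = ν x := by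
  intro x y hy
  rcases Submodule.mem_sup.1 hy with ⟨a, ha, b, hb, rfl⟩
  rw [← add_assoc, h2 _ b hb, h1 _ a ha]

theorem projN_sup_of_const {N₁ N₂ : Submodule R M} {ν : M → ℝ}
    (hc : ∀ x : M, ∀ y ∈ N₂, ν (x + y) = ν x) :
    projN N₁ ν = projN (N₁ ⊔ N₂) ν := by
  have h1 : ∀ x : M, ∀ y ∈ N₁, projN N₁ ν (x + y) = projN N₁ ν x :=
    fun x y hy => projN_shift N₁ ν x y hy
  have h2 := projN_shift_of_const (N₂ := N₂) N₁ hc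
  have h3 := const_sup h1 h2
  calc projN N₁ ν = projN (N₁ ⊔ N₂) (projN N₁ ν) := (projN_of_const _ _ h3).symm
    _ = projN (N₁ ⊔ N₂) ν := projN_projN_of_le le_sup_left ν

end VspaceAux

namespace VspaceAux

variable {R M : Type} [CommRing R] [AddCommGroup M] [Module R M] [Fintype M]

theorem univ_eq (F1 F2 : Fintype M) : @Finset.univ M F1 = @Finset.univ M F2 := by
  congr 1; exact Subsingleton.elim _ _

theorem projN_apply' (N : Submodule R M) (ν : M → ℝ) (x : M) :
    projN N ν x = (∑ y ∈ Finset.univ.filter (fun y => y ∈ N), ν (x + y)) / (Nat.card N : ℝ) := by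
  rw [projN_apply]
  congr 2
  rw [univ_eq (Fintype.ofFinite M) ‹Fintype M›]

theorem card_filter_mem' (N : Submodule R M) :
    (Finset.univ.filter (fun y => y ∈ N)).card = (Nat.card N : ℕ) := by
  rw [Nat.card_eq_fintype_card]
  rw [Fintype.card_subtype]

theorem projN_bot (ν : M → ℝ) : projN (⊥ : Submodule R M) ν = ν := by
  funext x
  rw [projN_apply']
  have h1 : (Finset.univ.filter (fun y => y ∈ (⊥ : Submodule R M))) = {(0 : M)} := by
    ext y; simp [Submodule.mem_bot]
  rw [h1, Finset.sum_singleton, add_zero]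
  have h2 : Nat.card (⊥ : Submodule R M) = 1 := Nat.card_unique
  rw [h2, Nat.cast_one, div_one]

theorem inner_projN (N : Submodule R M) {ν₁ : M → ℝ} (ν₂ : M → ℝ)
    (hc : ∀ x : M, ∀ y ∈ N, ν₁ (x + y) = ν₁ x) :
    ∑ x : M, ν₁ x * ν₂ x = ∑ x : M, ν₁ x * projN N ν₂ x := by
  calc ∑ x : M, ν₁ x * ν₂ x
      = (Nat.card N : ℝ) * (∑ x : M, ν₁ x * ν₂ x) / (Nat.card N : ℝ) := by
        rw [mul_div_cancel_left₀ _ (natCard_pos N).ne']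
    _ = (∑ y ∈ Finset.univ.filter (fun y => y ∈ N),
          ∑ x : M, ν₁ x * ν₂ (x + y)) / (Nat.card N : ℝ) := by
        congr 1
        rw [← card_filter_mem' N, Finset.card_eq_sum_ones, Nat.cast_sum]
        rw [Finset.sum_mul]
        refine Finset.sum_congr rfl fun y hy => ?_
        have hyN : y ∈ N := by simpa using hy
        rw [Nat.cast_one, one_mul]
        refine Fintype.sum_equiv (Equiv.subRight y) _ _ fun x => ?_
        simp only [Equiv.subRight_apply]
        rw [sub_add_cancel, ← hc (x - y) y hyN, sub_add_cancel]
    _ = ∑ x : M, ν₁ x * projN N ν₂ x := by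
        rw [Finset.sum_comm]
        rw [Finset.sum_div]
        refine Finset.sum_congr rfl fun x _ => ?_
        rw [projN_apply' N ν₂ x, ← mul_div_assoc, Finset.mul_sum, Finset.sum_div]

theorem strict_filter_ssub {N P : Submodule R M} (h : N < P) :
    Finset.univ.filter (fun Q => P < Q) ⊂ Finset.univ.filter (fun Q => N < Q) := by
  rw [Finset.ssubset_iff_of_subset]
  · exact ⟨P, by simp [h], by simp⟩
  · intro Q hQ
    simp only [Finset.mem_filter, Finset.mem_univ, true_and] at hQ ⊢
    exact h.trans hQ

noncomputable def comp (ν : M → ℝ) (N : Submodule R M) : M → ℝ :=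
  projN N ν - ∑ P ∈ (Finset.univ.filter (fun Q => N < Q)).attach, comp ν ↑P
termination_by (Finset.univ.filter (fun Q => N < Q)).card
decreasing_by
  refine Finset.card_lt_card (strict_filter_ssub ?_)
  exact (Finset.mem_filter.1 P.2).2

theorem comp_def (ν : M → ℝ) (N : Submodule R M) :
    comp ν N = projN N ν - ∑ P ∈ Finset.univ.filter (fun Q => N < Q), comp ν P := by
  conv_lhs => rw [comp]
  rw [Finset.sum_attach]

theorem sum_comp_ge (ν : M → ℝ) (N : Submodule R M) :
    ∑ P ∈ Finset.univ.filter (fun Q => N ≤ Q), comp ν P = projN N ν := by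
  have hins : Finset.univ.filter (fun Q => N ≤ Q)
      = insert N (Finset.univ.filter (fun Q => N < Q)) := by
    ext Q
    simp only [Finset.mem_filter, Finset.mem_univ, true_and, Finset.mem_insert]
    constructor
    · intro h
      rcases lt_or_eq_of_le h with h | h
      · exact Or.inr h
      · exact Or.inl h.symm
    · rintro (rfl | h)
      · exact le_refl _
      · exact h.le
  rw [hins, Finset.sum_insert (by simp)]
  rw [comp_def]
  abel

theorem comp_const (ν : M → ℝ) :
    ∀ N : Submodule R M, ∀ x : M, ∀ y ∈ N, comp ν N (x + y) = comp ν N x := by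
  have H : ∀ n : ℕ, ∀ N : Submodule R M,
      (Finset.univ.filter (fun Q => N < Q)).card ≤ n →
      ∀ x : M, ∀ y ∈ N, comp ν N (x + y) = comp ν N x := by
    intro n
    induction n using Nat.strong_induction_on with
    | _ n ih =>
      intro N hN x y hy
      rw [comp_def]
      simp only [Pi.sub_apply, Finset.sum_apply]
      congr 1
      · exact projN_shift N ν x y hy
      · refine Finset.sum_congr rfl fun P hP => ?_
        have hNP : N < P := (Finset.mem_filter.1 hP).2
        have hcard : (Finset.univ.filter (fun Q => P < Q)).card < n :=
          lt_of_lt_of_le (Finset.card_lt_card (strict_filter_ssub hNP)) hN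
        exact ih _ hcard P le_rfl x y (hNP.le hy)
  exact fun N => H _ N le_rfl

theorem comp_proj_zero (ν : M → ℝ) :
    ∀ N N' : Submodule R M, N < N' → projN N' (comp ν N) = 0 := by
  have H : ∀ n : ℕ, ∀ N : Submodule R M,
      (Finset.univ.filter (fun Q => N < Q)).card ≤ n →
      ∀ N' : Submodule R M, N < N' → projN N' (comp ν N) = 0 := by
    intro n
    induction n using Nat.strong_induction_on with
    | _ n ih =>
      intro N hN N' hNN'
      rw [comp_def, projN_sub, projN_finsum]
      rw [projN_projN_of_le hNN'.le]
      have key : ∀ P ∈ Finset.univ.filter (fun Q => N < Q),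
          projN N' (comp ν P) = if N' ≤ P then comp ν P else 0 := by
        intro P hP
        have hNP : N < P := (Finset.mem_filter.1 hP).2
        have hconst := comp_const ν P
        by_cases h : N' ≤ P
        · rw [if_pos h]
          rw [projN_sup_of_const (N₂ := P) hconst, sup_eq_right.2 h]
          exact projN_of_const _ _ hconst
        · rw [if_neg h]
          rw [projN_sup_of_const (N₂ := P) hconst]
          have hPlt : P < N' ⊔ P := by
            rcases lt_or_eq_of_le (le_sup_right : P ≤ N' ⊔ P) with h' | h'
            · exact h'
            · exact absurd (sup_eq_right.1 h'.symm) h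
          have hcard : (Finset.univ.filter (fun Q => P < Q)).card < n :=
            lt_of_lt_of_le (Finset.card_lt_card (strict_filter_ssub hNP)) hN
          exact ih _ hcard P le_rfl _ hPlt
      rw [Finset.sum_congr rfl key]
      rw [← Finset.sum_filter]
      rw [Finset.filter_filter]
      have hf : Finset.univ.filter (fun Q => N < Q ∧ N' ≤ Q)
          = Finset.univ.filter (fun Q => N' ≤ Q) := by
        ext Q
        simp only [Finset.mem_filter, Finset.mem_univ, true_and]
        exact ⟨fun h => h.2, fun h => ⟨lt_of_lt_of_le hNN' h, h⟩⟩
      rw [hf, sum_comp_ge]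
      exact sub_self _
  exact fun N => H _ N le_rfl

theorem comp_mem_Vspace (ν : M → ℝ) (N : Submodule R M) : comp ν N ∈ Vspace N :=
  ⟨comp_const ν N, fun N' h => comp_proj_zero ν N N' h⟩

theorem sum_comp (ν : M → ℝ) (x : M) : ∑ N : Submodule R M, comp ν N x = ν x := by
  have h1 : Finset.univ.filter (fun Q => (⊥ : Submodule R M) ≤ Q) = Finset.univ :=
    Finset.filter_true_of_mem (fun Q _ => bot_le)
  have h2 := sum_comp_ge ν (⊥ : Submodule R M)
  rw [h1, projN_bot] at h2
  calc ∑ N : Submodule R M, comp ν N x = (∑ N : Submodule R M, comp ν N) x := by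
        rw [Finset.sum_apply]
    _ = ν x := by rw [h2]

theorem orth_aux {N₁ N₂ : Submodule R M} {ν₁ ν₂ : M → ℝ}
    (h1 : ν₁ ∈ Vspace N₁) (h2 : ν₂ ∈ Vspace N₂) (hlt : N₂ < N₁ ⊔ N₂) :
    ∑ x : M, ν₁ x * ν₂ x = 0 := by
  rw [inner_projN N₁ ν₂ h1.1]
  rw [projN_sup_of_const (N₂ := N₂) h2.1]
  rw [h2.2 _ hlt]
  simp

theorem orth {N₁ N₂ : Submodule R M} (hne : N₁ ≠ N₂) {ν₁ ν₂ : M → ℝ}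
    (h1 : ν₁ ∈ Vspace N₁) (h2 : ν₂ ∈ Vspace N₂) :
    ∑ x : M, ν₁ x * ν₂ x = 0 := by
  by_cases h : N₂ < N₁ ⊔ N₂
  · exact orth_aux h1 h2 h
  · have heq : N₁ ⊔ N₂ = N₂ := by
      rcases lt_or_eq_of_le (le_sup_right : N₂ ≤ N₁ ⊔ N₂) with h' | h'
      · exact absurd h' h
      · exact h'.symm
    have hle : N₁ ≤ N₂ := le_sup_left.trans heq.le
    have hlt : N₁ < N₂ ⊔ N₁ := by
      rw [sup_comm, heq]
      exact lt_of_le_of_ne hle hne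
    calc ∑ x : M, ν₁ x * ν₂ x = ∑ x : M, ν₂ x * ν₁ x := by
          refine Finset.sum_congr rfl fun x _ => mul_comm _ _
      _ = 0 := orth_aux h2 h1 hlt

end VspaceAux

/-- **`𝒫(M)` is the internal orthogonal direct sum of the `V(M,N)`:**
the subspaces are pairwise orthogonal and every signed measure decomposes
uniquely as a sum of components in the `V(M,N)`. -/
theorem Vspace_direct_sum
    (R : Type) [CommRing R] [Fintype R]
    (M : Type) [AddCommGroup M] [Module R M] [Fintype M] :
    (∀ N₁ N₂ : Submodule R M, N₁ ≠ N₂ →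
      ∀ ν₁ ∈ Vspace N₁, ∀ ν₂ ∈ Vspace N₂, ∑ x : M, ν₁ x * ν₂ x = 0) ∧
    (∀ ν : M → ℝ, ∃! c : Submodule R M → (M → ℝ),
      (∀ N : Submodule R M, c N ∈ Vspace N) ∧
      ν = fun x => ∑ N : Submodule R M, c N x) := by
  constructor
  · intro N₁ N₂ hne ν₁ h1 ν₂ h2
    exact VspaceAux.orth hne h1 h2
  · intro ν
    refine ⟨VspaceAux.comp ν, ⟨VspaceAux.comp_mem_Vspace ν, ?_⟩, ?_⟩
    · funext x
      exact (VspaceAux.sum_comp ν x).symm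
    · rintro c' ⟨hc'mem, hc'sum⟩
      set d : Submodule R M → (M → ℝ) := fun N => c' N - VspaceAux.comp ν N with hd
      have hdV : ∀ N : Submodule R M, d N ∈ Vspace N := by
        intro N
        constructor
        · intro x y hy
          simp only [hd, Pi.sub_apply]
          rw [(hc'mem N).1 x y hy, VspaceAux.comp_const ν N x y hy]
        · intro N' hN'
          simp only [hd]
          rw [VspaceAux.projN_sub, (hc'mem N).2 N' hN',
            VspaceAux.comp_proj_zero ν N N' hN', sub_zero]
      have hsum0 : ∀ x : M, ∑ N : Submodule R M, d N x = 0 := by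
        intro x
        simp only [hd, Pi.sub_apply, Finset.sum_sub_distrib]
        rw [VspaceAux.sum_comp ν x, ← congrFun hc'sum x, sub_self]
      funext N₀
      have A : ∑ N : Submodule R M, (∑ x : M, d N₀ x * d N x) = 0 := by
        rw [Finset.sum_comm]
        refine Finset.sum_eq_zero fun x _ => ?_
        rw [← Finset.mul_sum, hsum0 x, mul_zero]
      have B : ∑ N : Submodule R M, (∑ x : M, d N₀ x * d N x)
          = ∑ x : M, d N₀ x * d N₀ x := by
        refine Finset.sum_eq_single N₀ (fun N _ hN => ?_) (fun h => absurd (Finset.mem_univ N₀) h)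
        exact VspaceAux.orth (Ne.symm hN) (hdV N₀) (hdV N)
      have C : ∑ x : M, d N₀ x * d N₀ x = 0 := by rw [← B, A]
      have D : ∀ x : M, d N₀ x = 0 := by
        intro x
        have := (Finset.sum_eq_zero_iff_of_nonneg
          (fun x _ => mul_self_nonneg (d N₀ x))).1 C x (Finset.mem_univ x)
        exact mul_self_eq_zero.1 this
      funext x
      have := D x
      simpa [hd, sub_eq_zero] using this

end
end

section
/- Let R be a finite commutative ring. If L is a Fourier R-module and L' is a submodule of L, then L' is a Fourier R-module. -/
/-!
Submodules of Fourier modules are Fourier.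
-/

noncomputable section

/-- A finite `R`-module `L` is *Fourier* if there is a nonzero signed measure
`ν` on `L` whose average over `N`-cosets vanishes for every nonzero submodule
`N` of `L`. -/
def IsFourier (R : Type) [CommRing R] (L : Type) [AddCommGroup L] [Module R L]
    [Finite L] : Prop :=
  ∃ ν : L → ℝ, ν ≠ 0 ∧ ∀ N : Submodule R L, N ≠ ⊥ → projN N ν = 0

/-- **A submodule of a Fourier module is Fourier.** -/
theorem isFourier_submodule
    (R : Type) [CommRing R] [Fintype R]
    (L : Type) [AddCommGroup L] [Module R L] [Finite L]
    (L' : Submodule R L)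
    (hL : IsFourier R L) :
    IsFourier R L' := by
  classical
  obtain ⟨ν, hν, h⟩ := hL
  obtain ⟨a, ha⟩ : ∃ a, ν a ≠ 0 := by
    by_contra hc
    push_neg at hc
    exact hν (funext fun x => hc x)
  refine ⟨fun x => ν (a + (x : L)), ?_, ?_⟩
  · intro h0
    have := congrFun h0 0
    simp only [Pi.zero_apply, ZeroMemClass.coe_zero, add_zero] at this
    exact ha this
  · intro N hN
    set N' : Submodule R L := N.map L'.subtype with hN'def
    have hinj : Function.Injective L'.subtype := Submodule.injective_subtype L'
    have hN' : N' ≠ ⊥ := by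
      intro hb
      apply hN
      exact Submodule.map_injective_of_injective hinj
        (hb.trans (Submodule.map_bot L'.subtype).symm)
    have h0 := h N' hN'
    funext x
    have hx := congrFun h0 (a + (x : L))
    letI : Fintype L := Fintype.ofFinite _
    letI : Fintype L' := Fintype.ofFinite _
    unfold projN at hx ⊢
    simp only [Pi.zero_apply] at hx ⊢
    have hcard : (Nat.card N' : ℝ) = (Nat.card N : ℝ) := by
      congr 1
      exact (Nat.card_congr
        (Submodule.equivMapOfInjective L'.subtype hinj N).toEquiv).symm
    have hsum : ∑ y ∈ Finset.univ.filter (fun y => y ∈ N),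
          ν (a + ((x + y : L') : L)) =
        ∑ y ∈ Finset.univ.filter (fun y => y ∈ N'), ν ((a + (x : L)) + y) := by
      refine Finset.sum_bij (fun y _ => (y : L)) ?_ ?_ ?_ ?_
      · intro y hy
        simp only [Finset.mem_filter, Finset.mem_univ, true_and] at hy ⊢
        exact ⟨y, hy, rfl⟩
      · intro y₁ h₁ y₂ h₂ hyy
        exact Subtype.ext hyy
      · intro y' hy'
        simp only [Finset.mem_filter, Finset.mem_univ, true_and] at hy'
        obtain ⟨y, hy, rfl⟩ := hy'
        exact ⟨y, Finset.mem_filter.2 ⟨Finset.mem_univ _, by simpa using hy⟩, rfl⟩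
      · intro y hy
        push_cast
        rw [add_assoc]
    rw [hsum, ← hcard] at *
    rw [hx]
end
end

section
/- Let R be a finite commutative ring and L a finite R-module. If L has a unique minimal nonzero submodule (i.e., there is a nonzero submodule N₀ contained in every nonzero submodule of L), then L is a Fourier R-module. -/
/-!
A finite module with a unique minimal nonzero submodule is Fourier.
-/

noncomputable section

/-- **A module with a unique minimal nonzero submodule is Fourier.** -/
theorem isFourier_of_unique_minimal_submodule
    (R : Type) [CommRing R] [Fintype R]
    (L : Type) [AddCommGroup L] [Module R L] [Finite L]
    (N₀ : Submodule R L) (hN₀ : N₀ ≠ ⊥)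
    (hmin : ∀ N : Submodule R L, N ≠ ⊥ → N₀ ≤ N) :
    IsFourier R L := by
  classical
  letI : Fintype L := Fintype.ofFinite _
  obtain ⟨n, hnN, hn0⟩ : ∃ n ∈ N₀, n ≠ (0 : L) := by
    by_contra h
    push_neg at h
    apply hN₀
    ext x
    simp only [Submodule.mem_bot]
    exact ⟨fun hx => h x hx, fun hx => hx ▸ N₀.zero_mem⟩
  set c : ℝ := (Nat.card N₀ : ℝ) with hc
  set ν : L → ℝ := fun x => c * (if x = 0 then 1 else 0) - (if x ∈ N₀ then 1 else 0) with hν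
  have hcard : c = ((Finset.univ.filter (fun z : L => z ∈ N₀)).card : ℝ) := by
    rw [hc, Nat.card_eq_fintype_card, Fintype.card_subtype]
  refine ⟨ν, ?_, ?_⟩
  · intro h
    have h2 := congrFun h n
    simp only [hν, Pi.zero_apply, if_neg hn0, if_pos hnN, mul_zero, zero_sub] at h2
    norm_num at h2
  · intro N hN
    have hsub : N₀ ≤ N := hmin N hN
    funext x
    show (∑ y ∈ Finset.univ.filter (fun y => y ∈ N), ν (x + y)) / (Nat.card N : ℝ) = 0
    rw [div_eq_zero_iff]
    left
    rw [Finset.sum_filter]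
    have hre : ∀ y : L, (if y ∈ N then ν (x + y) else 0)
        = (fun z => if z - x ∈ N then ν z else 0) (x + y) := by
      intro y
      simp only [add_sub_cancel_left]
    calc ∑ y : L, (if y ∈ N then ν (x + y) else 0)
        = ∑ y : L, (fun z => if z - x ∈ N then ν z else 0) ((Equiv.addLeft x) y) := by
          refine Finset.sum_congr rfl fun y _ => ?_
          rw [hre y]; rfl
      _ = ∑ z : L, (if z - x ∈ N then ν z else 0) := Equiv.sum_comp (Equiv.addLeft x) (fun z => if z - x ∈ N then ν z else 0)
      _ = 0 := by
          by_cases hx : x ∈ N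
          · have hterm : ∀ z : L, (if z - x ∈ N then ν z else 0) = ν z := by
              intro z
              by_cases hz : z - x ∈ N
              · rw [if_pos hz]
              · rw [if_neg hz]
                have hz0 : z ≠ 0 := by
                  rintro rfl
                  exact hz (by simpa using N.neg_mem hx)
                have hzN : z ∉ N₀ := by
                  intro hzN₀
                  exact hz (N.sub_mem (hsub hzN₀) hx)
                simp [hν, hz0, hzN]
            rw [Finset.sum_congr rfl fun z _ => hterm z]
            simp only [hν, Finset.sum_sub_distrib, ← Finset.mul_sum]
            rw [Finset.sum_ite_eq' Finset.univ (0 : L) (fun _ => (1 : ℝ))]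
            rw [← Finset.sum_filter]
            simp [← hcard]
          · have hterm : ∀ z : L, (if z - x ∈ N then ν z else 0) = 0 := by
              intro z
              by_cases hz : z - x ∈ N
              · rw [if_pos hz]
                have hz0 : z ≠ 0 := by
                  rintro rfl
                  exact hx (by simpa using N.neg_mem hz)
                have hzN : z ∉ N₀ := by
                  intro hzN₀
                  exact hx (by simpa using N.sub_mem (hsub hzN₀) hz)
                simp [hν, hz0, hzN]
              · rw [if_neg hz]
            rw [Finset.sum_congr rfl fun z _ => hterm z]
            simp

end
end

section
/- Let R be a finite commutative local ring with residue field k = R/𝔪, and view k^n as an R-module (on which 𝔪 acts by zero). Then k^n is a Fourier R-module if and only if n = 0 or n = 1. -/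
/-!
Over a finite local ring `R` with residue field `k`, the module `k^n` is
Fourier if and only if `n = 0` or `n = 1`.
-/

noncomputable section

instance residueFieldFinite (R : Type) [CommRing R] [Fintype R] [IsLocalRing R] :
    Finite (IsLocalRing.ResidueField R) :=
  Finite.of_surjective (IsLocalRing.residue R) Ideal.Quotient.mk_surjective

-- helper 1
open Classical in
theorem projN_sum_eq_zero {R M : Type} [CommRing R] [AddCommGroup M] [Module R M]
    [Finite M] [Fintype M] {N : Submodule R M} {ν : M → ℝ}
    (h : projN N ν = 0) (x : M) :
    ∑ y ∈ Finset.univ.filter (fun y => y ∈ N), ν (x + y) = 0 := by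
  have h' := congrFun h x
  simp only [projN, Pi.zero_apply] at h'
  rw [div_eq_zero_iff] at h'
  rcases h' with h' | h'
  · rw [Subsingleton.elim (Fintype.ofFinite M) ‹Fintype M›] at h'
    exact h'
  · have hpos : (0:ℕ) < Nat.card N := Nat.card_pos
    exact absurd h' (by exact_mod_cast hpos.ne')

-- helper 2
theorem sum_shift_s17 {M : Type} [AddCommGroup M] [Fintype M] (ν : M → ℝ) (x : M) :
    ∑ y, ν (x + y) = ∑ z, ν z :=
  Fintype.sum_equiv (Equiv.addLeft x) _ _ (fun _ => rfl)

theorem projN_top_eq_zero {R M : Type} [CommRing R] [AddCommGroup M] [Module R M]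
    [Finite M] (ν : M → ℝ) (h : ∀ (_ : Fintype M), ∑ z, ν z = 0) :
    projN (⊤ : Submodule R M) ν = 0 := by
  classical
  letI : Fintype M := Fintype.ofFinite M
  funext x
  simp only [projN, Pi.zero_apply]
  rw [Finset.filter_true_of_mem (fun y _ => Submodule.mem_top)]
  rw [sum_shift_s17, h _, zero_div]

theorem mem_span_singleton_iff (R : Type) [CommRing R] [IsLocalRing R] {n : ℕ}
    (v y : Fin n → IsLocalRing.ResidueField R) :
    y ∈ Submodule.span R {v} ↔ ∃ c : IsLocalRing.ResidueField R, c • v = y := by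
  rw [Submodule.mem_span_singleton]
  constructor
  · rintro ⟨r, rfl⟩; exact ⟨IsLocalRing.residue R r, rfl⟩
  · rintro ⟨c, rfl⟩
    obtain ⟨r, rfl⟩ := Ideal.Quotient.mk_surjective c
    exact ⟨r, rfl⟩

/-- **`k^n` is Fourier iff `n = 0` or `n = 1`.** -/
theorem isFourier_residueField_pow_iff
    (R : Type) [CommRing R] [Fintype R] [IsLocalRing R]
    (n : ℕ) :
    IsFourier R (Fin n → IsLocalRing.ResidueField R) ↔ n = 0 ∨ n = 1 := by
  classical
  set k := IsLocalRing.ResidueField R with hk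
  letI : Fintype k := Fintype.ofFinite _
  constructor
  · rintro ⟨ν, hν, hproj⟩
    by_contra hn
    push_neg at hn
    have h2 : 2 ≤ n := by omega
    -- a point where ν is nonzero
    obtain ⟨x₀, hx₀⟩ : ∃ x, ν x ≠ 0 := by
      by_contra h; push_neg at h; exact hν (funext fun x => h x)
    -- total sum of ν is zero
    have hT : ∑ z : Fin n → k, ν z = 0 := by
      have := projN_sum_eq_zero (hproj ⊤ (by
        intro h
        have : (fun _ => 1 : Fin n → k) ∈ (⊥ : Submodule R (Fin n → k)) := h ▸ Submodule.mem_top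
        rw [Submodule.mem_bot] at this
        have := congrFun this ⟨0, by omega⟩
        exact one_ne_zero this)) (0 : Fin n → k)
      simpa using this
    -- line sums are zero
    have hS : ∀ v : Fin n → k, v ≠ 0 →
        ∑ y ∈ Finset.univ.filter (fun y => y ∈ Submodule.span R {v}), ν (x₀ + y) = 0 := by
      intro v hv
      exact projN_sum_eq_zero (hproj _ (by
        simpa [Submodule.span_singleton_eq_bot] using hv)) x₀
    set F0 : Finset (Fin n → k) := Finset.univ.filter (fun v => v ≠ 0) with hF0
    -- double counting
    have key : (0:ℝ) = ∑ y : Fin n → k,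
        ((F0.filter (fun v => y ∈ Submodule.span R {v})).card : ℝ) * ν (x₀ + y) := by
      calc (0:ℝ) = ∑ v ∈ F0, ∑ y ∈ Finset.univ.filter
              (fun y => y ∈ Submodule.span R {v}), ν (x₀ + y) := by
            symm; exact Finset.sum_eq_zero fun v hv =>
              hS v (by simpa [hF0] using hv)
        _ = ∑ v ∈ F0, ∑ y : Fin n → k,
              if y ∈ Submodule.span R {v} then ν (x₀ + y) else 0 := by
            exact Finset.sum_congr rfl fun v _ => Finset.sum_filter _ _
        _ = ∑ y : Fin n → k, ∑ v ∈ F0,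
              if y ∈ Submodule.span R {v} then ν (x₀ + y) else 0 := Finset.sum_comm
        _ = _ := by
            refine Finset.sum_congr rfl fun y _ => ?_
            rw [← Finset.sum_filter, Finset.sum_const, nsmul_eq_mul]
    -- cardinalities
    have hq : 2 ≤ Fintype.card k := Fintype.one_lt_card
    have hQ : Fintype.card (Fin n → k) = Fintype.card k ^ n := by
      simp [Fintype.card_fun]
    have hQq : Fintype.card k < Fintype.card (Fin n → k) := by
      rw [hQ]
      calc Fintype.card k = Fintype.card k ^ 1 := (pow_one _).symm
        _ < Fintype.card k ^ n := Nat.pow_lt_pow_right hq (by omega)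
    have hcard0 : F0.card = Fintype.card (Fin n → k) - 1 := by
      rw [hF0, Finset.filter_ne', Finset.card_erase_of_mem (Finset.mem_univ _),
        Finset.card_univ]
    have hfilter0 : F0.filter (fun v => (0 : Fin n → k) ∈ Submodule.span R {v}) = F0 :=
      Finset.filter_true_of_mem fun v _ => Submodule.zero_mem _
    have hcy : ∀ y : Fin n → k, y ≠ 0 →
        (F0.filter (fun v => y ∈ Submodule.span R {v})).card = Fintype.card k - 1 := by
      intro y hy
      have himg : F0.filter (fun v => y ∈ Submodule.span R {v})
          = (Finset.univ.filter (fun c : k => c ≠ 0)).image (fun c => c • y) := by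
        ext v
        simp only [hF0, Finset.mem_filter, Finset.mem_image, Finset.mem_univ, true_and,
          Finset.filter_filter]
        constructor
        · rintro ⟨hv0, hyv⟩
          obtain ⟨c, hc⟩ := (mem_span_singleton_iff R v y).mp hyv
          have hc0 : c ≠ 0 := by
            rintro rfl; rw [zero_smul] at hc; exact hy hc.symm
          exact ⟨c⁻¹, inv_ne_zero hc0, by
            rw [← hc, smul_smul, inv_mul_cancel₀ hc0, one_smul]⟩
        · rintro ⟨c, hc0, rfl⟩
          refine ⟨smul_ne_zero hc0 hy, (mem_span_singleton_iff R _ y).mpr ⟨c⁻¹, ?_⟩⟩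
          rw [smul_smul, inv_mul_cancel₀ hc0, one_smul]
      rw [himg, Finset.card_image_of_injective _ (smul_left_injective k hy),
        Finset.filter_ne', Finset.card_erase_of_mem (Finset.mem_univ _), Finset.card_univ]
    -- split off the y = 0 term
    have hsplit := Finset.sum_erase_add Finset.univ
      (fun y : Fin n → k =>
        ((F0.filter (fun v => y ∈ Submodule.span R {v})).card : ℝ) * ν (x₀ + y))
      (Finset.mem_univ (0 : Fin n → k))
    have herase : ∑ y ∈ Finset.univ.erase (0 : Fin n → k),
        ((F0.filter (fun v => y ∈ Submodule.span R {v})).card : ℝ) * ν (x₀ + y)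
        = ((Fintype.card k - 1 : ℕ) : ℝ) *
          ∑ y ∈ Finset.univ.erase (0 : Fin n → k), ν (x₀ + y) := by
      rw [Finset.mul_sum]
      exact Finset.sum_congr rfl fun y hy => by
        rw [hcy y (Finset.ne_of_mem_erase hy)]
    have hsum_erase : ∑ y ∈ Finset.univ.erase (0 : Fin n → k), ν (x₀ + y) = - ν x₀ := by
      have h1 := Finset.sum_erase_add Finset.univ (fun y => ν (x₀ + y))
        (Finset.mem_univ (0 : Fin n → k))
      rw [sum_shift_s17, hT] at h1
      simp only [add_zero] at h1
      linarith [h1]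
    -- put it together
    have final : ((Fintype.card (Fin n → k) - 1 : ℕ) : ℝ) * ν x₀
        + ((Fintype.card k - 1 : ℕ) : ℝ) * (- ν x₀) = 0 := by
      rw [← hsum_erase, ← herase]
      have h0term : ((F0.filter (fun v => (0 : Fin n → k) ∈ Submodule.span R {v})).card : ℝ)
          * ν (x₀ + 0) = ((Fintype.card (Fin n → k) - 1 : ℕ) : ℝ) * ν x₀ := by
        rw [hfilter0, hcard0, add_zero]
      rw [← h0term]
      rw [add_comm] at hsplit
      rw [hsplit]
      exact key.symm
    have hlt : ((Fintype.card k - 1 : ℕ) : ℝ) < ((Fintype.card (Fin n → k) - 1 : ℕ) : ℝ) := by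
      exact_mod_cast Nat.sub_lt_sub_right (by omega) hQq
    have h3 : (((Fintype.card (Fin n → k) - 1 : ℕ) : ℝ)
        - ((Fintype.card k - 1 : ℕ) : ℝ)) * ν x₀ = 0 := by linarith [final]
    exact hx₀ ((mul_eq_zero.mp h3).resolve_left (sub_ne_zero.mpr hlt.ne'))
  · rintro (rfl | rfl)
    · -- n = 0
      refine ⟨fun _ => 1, ?_, ?_⟩
      · intro h
        have := congrFun h (fun i => i.elim0)
        simp at this
      · intro N hN
        exact absurd ((Submodule.eq_bot_iff N).mpr
          fun x _ => funext fun i => i.elim0) hN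
    · -- n = 1
      set e : Fin 1 → k := fun _ => 1 with he
      have he0 : e ≠ 0 := by
        intro h
        have := congrFun h 0
        exact one_ne_zero this
      refine ⟨fun y => (if y = 0 then (1:ℝ) else 0) - (if y = e then 1 else 0), ?_, ?_⟩
      · intro h
        have := congrFun h 0
        simp [he0.symm] at this
      · intro N hN
        -- N = ⊤
        have hNtop : N = ⊤ := by
          obtain ⟨v, hvN, hv0⟩ := Submodule.exists_mem_ne_zero_of_ne_bot hN
          have hv00 : v 0 ≠ 0 := by
            intro h
            exact hv0 (funext fun i => by rw [Subsingleton.elim i 0]; exact h)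
          rw [eq_top_iff]
          intro w _
          obtain ⟨r, hr⟩ := IsLocalRing.residue_surjective (w 0 * (v 0)⁻¹)
          have hw : w = r • v := by
            funext i
            rw [Subsingleton.elim i 0]
            show w 0 = r • v 0
            have : r • v 0 = IsLocalRing.residue R r * v 0 := rfl
            rw [this, hr, mul_assoc, inv_mul_cancel₀ hv00, mul_one]
          rw [hw]
          exact Submodule.smul_mem N r hvN
        subst hNtop
        apply projN_top_eq_zero
        intro inst
        rw [Finset.sum_sub_distrib]
        simp [Finset.sum_ite_eq']

end
end

section
/- Let R be a finite commutative local ring with residue field k = R/𝔪. If M is a nonzero Fourier R-module, then Hom_R(k, M) ≅ k as R-modules; equivalently, the socle {m ∈ M : 𝔪m = 0} of M is a one-dimensional k-vector space. -/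
/-!
A nonzero Fourier module over a finite local ring has simple socle:
`Hom_R(k, M) ≅ k` as `R`-modules.
-/

noncomputable section

section aux

open IsLocalRing Finset

variable {R M : Type} [CommRing R] [Fintype R] [IsLocalRing R]
  [AddCommGroup M] [Module R M] [Finite M]

omit [Fintype R] [Finite M] in
/-- Existence of a nonzero socle element in a nonzero module, given nilpotency data. -/
lemma exists_socle_elem_aux (n : ℕ) : ∀ m : M, m ≠ 0 → (∀ x ∈ (maximalIdeal R)^n, x • m = 0) →
    ∃ s : M, s ≠ 0 ∧ ∀ r ∈ maximalIdeal R, r • s = 0 := by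
  induction n with
  | zero => intro m hm h
            exact absurd (h 1 (by simp)) (by simpa using hm)
  | succ n ih =>
    intro m hm h
    by_cases hs : ∀ r ∈ maximalIdeal R, r • m = 0
    · exact ⟨m, hm, hs⟩
    · push_neg at hs
      obtain ⟨r, hr, hrm⟩ := hs
      refine ih (r • m) hrm ?_
      intro x hx
      rw [smul_smul]
      apply h
      rw [pow_succ]
      exact Ideal.mul_mem_mul hx hr

omit [Finite M] in
/-- A nonzero finite module over a finite local ring has a nonzero socle element. -/
lemma exists_socle_elem (hM : Nontrivial M) :
    ∃ s : M, s ≠ 0 ∧ ∀ r ∈ maximalIdeal R, r • s = 0 := by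
  obtain ⟨n, hn⟩ : IsNilpotent (maximalIdeal R) := by
    have : IsArtinianRing R := inferInstance
    have := IsArtinianRing.isNilpotent_jacobson_bot (R := R)
    rwa [IsLocalRing.jacobson_eq_maximalIdeal ⊥ bot_ne_top] at this
  obtain ⟨m, hm⟩ := exists_ne (0 : M)
  refine exists_socle_elem_aux n m hm ?_
  intro x hx
  rw [hn] at hx
  simp only [Ideal.zero_eq_bot, Ideal.mem_bot] at hx
  simp [hx]

omit [Fintype R] [Finite M] in
/-- Symmetry of the "same line" relation among socle elements. -/
lemma span_symm {y z : M} (hy : y ≠ 0) (hzs : ∀ r ∈ maximalIdeal R, r • z = 0)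
    (h : y ∈ Submodule.span R {z}) : z ∈ Submodule.span R {y} := by
  obtain ⟨r, rfl⟩ := Submodule.mem_span_singleton.mp h
  have hr : IsUnit r := by
    by_contra hu
    exact hy (hzs r ((IsLocalRing.mem_maximalIdeal r).mpr hu))
  obtain ⟨u, rfl⟩ := hr
  exact Submodule.mem_span_singleton.mpr ⟨(↑u⁻¹ : R), by simp [smul_smul]⟩

omit [Fintype R] [Finite M] in
/-- The annihilator of a nonzero socle element is the maximal ideal. -/
lemma ker_toSpanSingleton_eq {z : M} (hz : z ≠ 0) (hzs : ∀ r ∈ maximalIdeal R, r • z = 0) :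
    LinearMap.ker (LinearMap.toSpanSingleton R M z) = maximalIdeal R := by
  refine le_antisymm ?_ ?_
  · apply IsLocalRing.le_maximalIdeal
    intro h
    have : (1 : R) ∈ LinearMap.ker (LinearMap.toSpanSingleton R M z) := by rw [h]; trivial
    simp [LinearMap.toSpanSingleton, LinearMap.mem_ker] at this
    exact hz this
  · intro r hr
    simpa [LinearMap.mem_ker, LinearMap.toSpanSingleton] using hzs r hr

/-- The line spanned by a nonzero socle element is a copy of the residue field. -/
noncomputable def spanSocleEquiv {z : M} (hz : z ≠ 0) (hzs : ∀ r ∈ maximalIdeal R, r • z = 0) :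
    (ResidueField R) ≃ₗ[R] (Submodule.span R {z} : Submodule R M) :=
  ((Submodule.quotEquivOfEq _ _ (ker_toSpanSingleton_eq hz hzs).symm).trans
    (LinearMap.quotKerEquivRange (LinearMap.toSpanSingleton R M z))).trans
    (LinearEquiv.ofEq _ _ (LinearMap.span_singleton_eq_range R M z).symm)

omit [Fintype R] [Finite M] in
lemma spanSocleEquiv_one {z : M} (hz : z ≠ 0) (hzs : ∀ r ∈ maximalIdeal R, r • z = 0) :
    ((spanSocleEquiv hz hzs (residue R 1) : (Submodule.span R {z} : Submodule R M)) : M) = z := by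
  show ((((Submodule.quotEquivOfEq _ _ (ker_toSpanSingleton_eq hz hzs).symm).trans
    (LinearMap.quotKerEquivRange (LinearMap.toSpanSingleton R M z))).trans
    (LinearEquiv.ofEq _ _ (LinearMap.span_singleton_eq_range R M z).symm))
      (Submodule.Quotient.mk 1) : M) = z
  rw [LinearEquiv.trans_apply, LinearEquiv.trans_apply, Submodule.quotEquivOfEq_mk,
    LinearEquiv.coe_ofEq_apply, LinearMap.quotKerEquivRange_apply_mk]
  simp [LinearMap.toSpanSingleton]

/-- The heart of the argument: in a Fourier module, the socle is spanned by any
single nonzero socle element.  Otherwise the socle would contain a submodule `N`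
of cardinality greater than `q = |k|` all of whose nonzero elements lie on lines
of cardinality `q`, and averaging the Fourier relations over all these lines
forces the measure `ν` to vanish. -/
lemma mem_span_of_socle (hF : IsFourier R M) {s t : M} (hs : s ≠ 0)
    (hss : ∀ r ∈ maximalIdeal R, r • s = 0) (hts : ∀ r ∈ maximalIdeal R, r • t = 0) :
    t ∈ Submodule.span R {s} := by
  by_contra ht
  obtain ⟨ν, hν, hproj⟩ := hF
  letI : Fintype M := Fintype.ofFinite _
  classical
  apply hν
  set q := Nat.card (ResidueField R) with hq
  have ht0 : t ≠ 0 := fun h => ht (h ▸ Submodule.zero_mem _)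
  set N : Submodule R M := Submodule.span R {s, t} with hN
  have hsN : s ∈ N := Submodule.subset_span (by simp)
  have htN : t ∈ N := Submodule.subset_span (by simp)
  have hNbot : N ≠ ⊥ := by
    intro h
    exact hs (by simpa [h] using hsN)
  have hNsoc : ∀ z ∈ N, ∀ r ∈ maximalIdeal R, r • z = 0 := by
    intro z hz
    induction hz using Submodule.span_induction with
    | mem x h =>
      rcases h with h | h
      · subst h; exact hss
      · simp only [Set.mem_singleton_iff] at h; subst h; exact hts
    | zero => simp
    | add x y _ _ ihx ihy => intro r hr; rw [smul_add, ihx r hr, ihy r hr, add_zero]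
    | smul c x _ ih => intro r hr; rw [smul_comm, ih r hr, smul_zero]
  -- the basic vanishing-sum consequence of the Fourier property
  have hsum : ∀ N' : Submodule R M, N' ≠ ⊥ → ∀ x : M,
      ∑ y ∈ univ.filter (fun y => y ∈ N'), ν (x + y) = 0 := by
    intro N' hN' x
    have h0 := congrFun (hproj N' hN') x
    simp only [projN, Pi.zero_apply] at h0
    have hcard : (Nat.card N' : ℝ) ≠ 0 := by
      have : 0 < Nat.card N' := Nat.card_pos
      exact_mod_cast this.ne'
    rw [div_eq_zero_iff] at h0
    rcases h0 with h0 | h0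
    · convert h0 using 2
    · exact absurd h0 hcard
  -- cardinality of a line
  have hcard_span : ∀ z : M, z ≠ 0 → (∀ r ∈ maximalIdeal R, r • z = 0) →
      (univ.filter (fun y => y ∈ Submodule.span R {z})).card = q := by
    intro z hz hzs
    have h1 : Nat.card (ResidueField R) = Nat.card (Submodule.span R {z} : Submodule R M) :=
      Nat.card_congr (spanSocleEquiv hz hzs).toEquiv
    rw [hq, h1, Nat.card_eq_fintype_card]
    convert (Fintype.card_subtype (fun y => y ∈ Submodule.span R {z})).symm using 1
  set A : Finset M := (univ.filter (fun y => y ∈ N)).erase 0 with hA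
  have hzeroN : (0 : M) ∈ univ.filter (fun y => y ∈ N) := by simp
  have hAins : univ.filter (fun y => y ∈ N) = insert 0 A := (Finset.insert_erase hzeroN).symm
  have hAsum : ∀ x : M, ∑ y ∈ A, ν (x + y) = - ν x := by
    intro x
    have := hsum N hNbot x
    rw [hAins, Finset.sum_insert (Finset.notMem_erase _ _)] at this
    simp only [add_zero] at this
    linarith
  -- the erased line sets, described as filters of A
  have hline : ∀ z ∈ A, ((univ.filter (fun y => y ∈ Submodule.span R {z})).erase 0)
      = A.filter (fun y => y ∈ Submodule.span R {z}) := by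
    intro z hz
    have hzN : z ∈ N := by simp only [hA, Finset.mem_erase, Finset.mem_filter] at hz; exact hz.2.2
    have hle : Submodule.span R {z} ≤ N := Submodule.span_le.mpr (by simpa using hzN)
    ext y
    simp only [Finset.mem_erase, Finset.mem_filter, Finset.mem_univ, true_and, hA]
    constructor
    · rintro ⟨hy0, hysp⟩; exact ⟨⟨hy0, hle hysp⟩, hysp⟩
    · rintro ⟨⟨hy0, _⟩, hysp⟩; exact ⟨hy0, hysp⟩
  have hAmem : ∀ z ∈ A, z ≠ 0 ∧ z ∈ N := by
    intro z hz
    simp only [hA, Finset.mem_erase, Finset.mem_filter] at hz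
    exact ⟨hz.1, hz.2.2⟩
  -- main identity at each point x
  have hfin : Finite (ResidueField R) :=
    Finite.of_surjective (IsLocalRing.residue R) IsLocalRing.residue_surjective
  have hq1 : 1 ≤ q := Nat.card_pos
  have hcardA : q ≤ A.card := by
    have hsub : univ.filter (fun y => y ∈ Submodule.span R {s}) ⊂ univ.filter (fun y => y ∈ N) := by
      refine Finset.ssubset_iff_of_subset ?_ |>.mpr ⟨t, by simpa using htN, by simpa using ht⟩
      intro y hy
      simp only [Finset.mem_filter, Finset.mem_univ, true_and] at hy ⊢
      exact Submodule.span_le.mpr (by simpa using hsN) hy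
    have h1 := Finset.card_lt_card hsub
    rw [hcard_span s hs hss] at h1
    have : A.card = (univ.filter (fun y => y ∈ N)).card - 1 := by
      rw [hA, Finset.card_erase_of_mem hzeroN]
    omega
  have key : ∀ x : M, ν x = 0 := by
    intro x
    have hT : ∑ z ∈ A, (∑ y ∈ univ.filter (fun y => y ∈ Submodule.span R {z}), ν (x + y)) = 0 := by
      refine Finset.sum_eq_zero fun z hz => ?_
      exact hsum _ (by simpa [Submodule.span_singleton_eq_bot] using (hAmem z hz).1) x
    have hsplit : ∀ z ∈ A, (∑ y ∈ univ.filter (fun y => y ∈ Submodule.span R {z}), ν (x + y))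
        = ν x + ∑ y ∈ A.filter (fun y => y ∈ Submodule.span R {z}), ν (x + y) := by
      intro z hz
      have h0mem : (0 : M) ∈ univ.filter (fun y => y ∈ Submodule.span R {z}) := by simp
      rw [← Finset.insert_erase h0mem, Finset.sum_insert (Finset.notMem_erase _ _), hline z hz,
        add_zero]
    rw [Finset.sum_congr rfl hsplit, Finset.sum_add_distrib, Finset.sum_const] at hT
    -- handle the double sum
    have hdouble : ∑ z ∈ A, ∑ y ∈ A.filter (fun y => y ∈ Submodule.span R {z}), ν (x + y)
        = ∑ y ∈ A, ((q - 1 : ℕ) : ℝ) * ν (x + y) := by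
      simp only [Finset.sum_filter]
      rw [Finset.sum_comm]
      refine Finset.sum_congr rfl fun y hy => ?_
      have h1 : ∀ z ∈ A, (if y ∈ Submodule.span R {z} then ν (x + y) else 0)
          = (if z ∈ Submodule.span R {y} then ν (x + y) else 0) := by
        intro z hz
        have hiff : (y ∈ Submodule.span R {z}) ↔ (z ∈ Submodule.span R {y}) :=
          ⟨fun h => span_symm (hAmem y hy).1 (hNsoc z (hAmem z hz).2) h,
           fun h => span_symm (hAmem z hz).1 (hNsoc y (hAmem y hy).2) h⟩
        simp only [hiff]
      rw [Finset.sum_congr rfl h1, ← Finset.sum_filter, Finset.sum_const, ← hline y hy,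
        Finset.card_erase_of_mem (by simp), hcard_span y (hAmem y hy).1 (hNsoc y (hAmem y hy).2)]
      simp [nsmul_eq_mul]
    rw [hdouble, ← Finset.mul_sum, hAsum x, nsmul_eq_mul] at hT
    have hqcast : ((q - 1 : ℕ) : ℝ) = (q : ℝ) - 1 := by
      have : (1:ℕ) ≤ q := hq1
      push_cast [this]
      ring
    rw [hqcast] at hT
    have hpos : (A.card : ℝ) - ((q : ℝ) - 1) ≥ 1 := by
      have : (q : ℝ) ≤ (A.card : ℝ) := by exact_mod_cast hcardA
      linarith
    nlinarith [hT, hpos]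
  funext x
  exact key x

end aux

open IsLocalRing in
/-- **A nonzero Fourier module has `Hom_R(k, M) ≅ k`.** -/
theorem hom_residueField_equiv_of_isFourier
    (R : Type) [CommRing R] [Fintype R] [IsLocalRing R]
    (M : Type) [AddCommGroup M] [Module R M] [Finite M]
    (hM : Nontrivial M) (hF : IsFourier R M) :
    Nonempty ((IsLocalRing.ResidueField R →ₗ[R] M) ≃ₗ[R] IsLocalRing.ResidueField R) := by
  obtain ⟨s, hs, hss⟩ := exists_socle_elem (R := R) hM
  let ev : (ResidueField R →ₗ[R] M) →ₗ[R] M := LinearMap.applyₗ (residue R 1)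
  have hev : ∀ f : ResidueField R →ₗ[R] M, ev f = f (residue R 1) := fun f => rfl
  have hsmul : ∀ r : R, r • (residue R 1) = residue R r := by
    intro r; rw [Algebra.smul_def]; simp [Ideal.Quotient.algebraMap_eq]
  have hinj : Function.Injective ev := by
    intro f g hfg
    ext c
    obtain ⟨r, rfl⟩ := residue_surjective c
    rw [← hsmul, map_smul, map_smul, ← hev, ← hev, hfg]
  have hrange : LinearMap.range ev = Submodule.span R {s} := by
    apply le_antisymm
    · rintro z hz
      obtain ⟨f, rfl⟩ := hz
      refine mem_span_of_socle hF hs hss ?_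
      intro r hr
      rw [hev, ← map_smul, hsmul,
        show residue R r = 0 from Ideal.Quotient.eq_zero_iff_mem.mpr hr, map_zero]
    · rw [Submodule.span_le, Set.singleton_subset_iff]
      refine ⟨(Submodule.span R {s}).subtype ∘ₗ (spanSocleEquiv hs hss).toLinearMap, ?_⟩
      rw [hev]
      simpa using spanSocleEquiv_one hs hss
  exact ⟨((LinearEquiv.ofInjective ev hinj).trans
    (LinearEquiv.ofEq _ _ hrange)).trans (spanSocleEquiv hs hss).symm⟩

end
end

section
/- Let R be a finite commutative ring, M a finite R-module, and N a submodule of M. Let ν be a probability measure on M and let ν_N denote the orthogonal projection of ν onto the subspace V(M,N) of 𝒫(M). Then the L¹ norm of ν_N satisfies ‖ν_N‖_{L¹(M)} = Σ_{m ∈ M} |ν_N(m)| ≤ √(|M/N|). -/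
/-!
Uniform `L¹` bound on the Fourier component `ν_N` of a probability measure
`ν` on a finite module `M`: `‖ν_N‖_{L¹(M)} ≤ √(|M/N|)`.
-/

noncomputable section

/-- **`L¹` bound on a Fourier component of a probability measure.**
If `νN` is the orthogonal projection of the probability measure `ν` onto
`V(M,N)` — i.e. `νN ∈ V(M,N)` and `ν − νN` is orthogonal to `V(M,N)` —
then `Σ_m |νN m| ≤ √(|M/N|)`. -/
theorem l1_bound_fourier_component
    (R : Type) [CommRing R] [Fintype R]
    (M : Type) [AddCommGroup M] [Module R M] [Fintype M]
    (N : Submodule R M)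
    (ν : M → ℝ) (hν0 : ∀ x, 0 ≤ ν x) (hν1 : ∑ x, ν x = 1)
    (νN : M → ℝ) (hνN : νN ∈ Vspace N)
    (horth : ∀ w ∈ Vspace N, ∑ x : M, (ν x - νN x) * w x = 0) :
    ∑ x : M, |νN x| ≤ Real.sqrt (Nat.card (M ⧸ N)) := by
  classical
  set n : ℝ := (Nat.card N : ℝ) with hn
  have hn0 : (0:ℝ) < n := by
    have : 0 < Nat.card N := Nat.card_pos
    rw [hn]
    exact_mod_cast this
  set π : M → M ⧸ N := Submodule.Quotient.mk with hπ
  have hmk_out : ∀ q : M ⧸ N, π (Quotient.out q) = q := by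
    intro q
    exact Quotient.out_eq q
  set v : M ⧸ N → ℝ := fun q => νN (Quotient.out q) with hv
  have hconst : ∀ x, νN x = v (π x) := by
    intro x
    have h : x - Quotient.out (π x) ∈ N := by
      rw [← Submodule.Quotient.eq]
      exact (hmk_out (π x)).symm
    have := hνN.1 (Quotient.out (π x)) _ h
    rw [add_sub_cancel] at this
    exact this
  -- fiber cardinality
  have hfib : ∀ q : M ⧸ N,
      ((Finset.univ.filter fun x => π x = q).card : ℝ) = n := by
    intro q
    have e : N ≃ {x : M // π x = q} :=
      { toFun := fun y => ⟨Quotient.out q + (y : M), by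
          have h2 : π (Quotient.out q + (y : M)) = π (Quotient.out q) := by
            rw [hπ, Submodule.Quotient.eq]; simpa using y.2
          exact h2.trans (hmk_out q)⟩
        invFun := fun x => ⟨(x : M) - Quotient.out q, by
          rw [← Submodule.Quotient.eq]
          exact x.2.trans (hmk_out q).symm⟩
        left_inv := fun y => by ext; simp
        right_inv := fun x => by ext; simp }
    have h1 : Nat.card N = Fintype.card {x : M // π x = q} :=
      (Nat.card_eq_fintype_card).trans (Fintype.card_congr e)
    rw [hn, h1, Fintype.card_subtype]
  -- sums over fibers
  have inner : ∀ q : M ⧸ N, ∀ f : ℝ → ℝ,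
      ∑ x ∈ Finset.univ.filter (fun x => π x = q), f (νN x) = n * f (v q) := by
    intro q f
    have h2 : ∀ x ∈ Finset.univ.filter (fun x => π x = q), f (νN x) = f (v q) := by
      intro x hx
      rw [hconst x, (Finset.mem_filter.mp hx).2]
    rw [Finset.sum_congr rfl h2, Finset.sum_const, nsmul_eq_mul, hfib]
  have hA : ∑ x, |νN x| = ∑ q : M ⧸ N, n * |v q| := by
    rw [← Finset.sum_fiberwise Finset.univ π (fun x => |νN x|)]
    exact Finset.sum_congr rfl fun q _ => inner q (fun t => |t|)
  have hS : ∑ x, νN x * νN x = ∑ q : M ⧸ N, n * (v q * v q) := by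
    rw [← Finset.sum_fiberwise Finset.univ π (fun x => νN x * νN x)]
    exact Finset.sum_congr rfl fun q _ => inner q (fun t => t * t)
  set u : M ⧸ N → ℝ :=
    fun q => ∑ x ∈ Finset.univ.filter (fun x => π x = q), ν x with hu
  have hT : ∑ x, ν x * νN x = ∑ q : M ⧸ N, u q * v q := by
    rw [← Finset.sum_fiberwise Finset.univ π (fun x => ν x * νN x)]
    refine Finset.sum_congr rfl fun q _ => ?_
    rw [hu, Finset.sum_mul]
    exact Finset.sum_congr rfl fun x hx => by
      rw [hconst x, (Finset.mem_filter.mp hx).2]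
  have hTS : ∑ x, ν x * νN x = ∑ x, νN x * νN x := by
    have h3 := horth νN hνN
    simp only [sub_mul] at h3
    rw [Finset.sum_sub_distrib] at h3
    linarith
  have hu0 : ∀ q, 0 ≤ u q := fun q => Finset.sum_nonneg fun x _ => hν0 x
  have hu1 : ∑ q : M ⧸ N, u q = 1 := by
    rw [hu]
    exact (Finset.sum_fiberwise Finset.univ π ν).trans hν1
  set a : ℝ := ∑ q : M ⧸ N, v q * v q with ha
  have ha0 : 0 ≤ a := Finset.sum_nonneg fun q _ => mul_self_nonneg _
  have h1 : n * a = ∑ q : M ⧸ N, u q * v q := by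
    calc n * a = ∑ q : M ⧸ N, n * (v q * v q) := by rw [ha, Finset.mul_sum]
      _ = ∑ x, νN x * νN x := hS.symm
      _ = ∑ x, ν x * νN x := hTS.symm
      _ = ∑ q : M ⧸ N, u q * v q := hT
  have hu2 : Real.sqrt (∑ q : M ⧸ N, u q ^ 2) ≤ 1 := by
    have h4 : ∑ q : M ⧸ N, u q ^ 2 ≤ 1 := by
      have := Finset.sum_sq_le_sq_sum_of_nonneg
        (s := (Finset.univ : Finset (M ⧸ N))) (f := u) (fun i _ => hu0 i)
      rw [hu1] at this; simpa using this
    calc Real.sqrt (∑ q : M ⧸ N, u q ^ 2) ≤ Real.sqrt 1 := Real.sqrt_le_sqrt h4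
      _ = 1 := Real.sqrt_one
  have hkey : n * a ≤ Real.sqrt a := by
    have hCS := Real.sum_mul_le_sqrt_mul_sqrt Finset.univ u v
    have h5 : ∑ q : M ⧸ N, v q ^ 2 = a := by
      rw [ha]; exact Finset.sum_congr rfl fun q _ => sq (v q) ▸ (pow_two (v q))
    rw [h5] at hCS
    calc n * a = ∑ q : M ⧸ N, u q * v q := h1
      _ ≤ Real.sqrt (∑ q : M ⧸ N, u q ^ 2) * Real.sqrt a := hCS
      _ ≤ 1 * Real.sqrt a := by
          exact mul_le_mul_of_nonneg_right hu2 (Real.sqrt_nonneg _)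
      _ = Real.sqrt a := one_mul _
  have hna : n * Real.sqrt a ≤ 1 := by
    rcases eq_or_lt_of_le ha0 with h | h
    · rw [← h]; simp
    · have hs : 0 < Real.sqrt a := Real.sqrt_pos.mpr h
      have : n * Real.sqrt a * Real.sqrt a ≤ 1 * Real.sqrt a := by
        rw [one_mul, mul_assoc, Real.mul_self_sqrt ha0]
        exact hkey
      exact le_of_mul_le_mul_right this hs
  -- final Cauchy-Schwarz
  set Qc : ℝ := (Nat.card (M ⧸ N) : ℝ) with hQ
  have hQc : ∑ q : M ⧸ N, (1:ℝ) ^ 2 = Qc := by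
    simp [hQ, Nat.card_eq_fintype_card]
  have hfinal : ∑ q : M ⧸ N, |v q| ≤ Real.sqrt a * Real.sqrt Qc := by
    have hCS := Real.sum_mul_le_sqrt_mul_sqrt Finset.univ (fun q => |v q|) (fun _ => (1:ℝ))
    simp only [mul_one] at hCS
    have h6 : ∑ q : M ⧸ N, |v q| ^ 2 = a := by
      rw [ha]; exact Finset.sum_congr rfl fun q _ => by rw [sq_abs, pow_two]
    rw [h6, hQc] at hCS
    exact hCS
  calc ∑ x, |νN x| = ∑ q : M ⧸ N, n * |v q| := hA
    _ = n * ∑ q : M ⧸ N, |v q| := by rw [Finset.mul_sum]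
    _ ≤ n * (Real.sqrt a * Real.sqrt Qc) := by
        exact mul_le_mul_of_nonneg_left hfinal (le_of_lt hn0)
    _ = (n * Real.sqrt a) * Real.sqrt Qc := by ring
    _ ≤ 1 * Real.sqrt Qc :=
        mul_le_mul_of_nonneg_right hna (Real.sqrt_nonneg _)
    _ = Real.sqrt Qc := one_mul _



end
end
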